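/- arXiv:1210.2458 — 8 statements merged into one kernel-verified Lean document; each statement's English description precedes it below -/
import Mathlib

section
/- Let n ∈ ℕ, let k ≥ 1, and let V be a set with a coloring col : V → [n]. Every finite word w ∈ V* with |w| ≥ k^n satisfies MaxSc_c(w) ≥ k for some color c ∈ [n]. -/
/-!
Read the word backwards, so that `Sc_c` of a prefix becomes `scAux c` of a suffix. Induct on the
number of colours. Erasing the letters of the top colour `n` does not change the scores of the
smaller colours, so the erased word is shorter than `k ^ n`; and between two consecutive letters
of colour `< n` (and at both ends) the word has a run of colour `n` of length `< k`, since the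
score of `n` counts that run. Hence the length is below `k * k ^ n`.
-/

namespace FDGames


/-- Score of color `c` read over the reversed word (head = last letter). -/
def scAux {V : Type*} (col : V → ℕ) (c : ℕ) : List V → ℕ
  | [] => 0
  | v :: w =>
    if c < col v then scAux col c w
    else if col v = c then scAux col c w + 1
    else 0

/-- `Sc col c w` : the scoring function `Sc_c` of McNaughton, for the word `w`. -/
def Sc {V : Type*} (col : V → ℕ) (c : ℕ) (w : List V) : ℕ :=
  scAux col c w.reverse

/-- `MaxSc col c w` : maximum of `Sc_c` over all prefixes of `w`. -/
def MaxSc {V : Type*} (col : V → ℕ) (c : ℕ) (w : List V) : ℕ :=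
  (Finset.range (w.length + 1)).sup fun m => Sc col c (w.take m)

section

variable {V : Type*} (col : V → ℕ)

theorem sc_le_maxSc {c : ℕ} {p w : List V} (h : p <+: w) : Sc col c p ≤ MaxSc col c w := by
  rw [List.prefix_iff_eq_take.mp h]
  exact Finset.le_sup (f := fun m => Sc col c (w.take m))
    (Finset.mem_range.mpr (Nat.lt_succ_of_le h.length_le))

theorem scAux_le_maxSc {c : ℕ} {s w : List V} (h : s <:+ w.reverse) :
    scAux col c s ≤ MaxSc col c w := by
  have h' : Sc col c s.reverse ≤ MaxSc col c w := sc_le_maxSc col (by simpa using h.reverse)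
  rwa [Sc, List.reverse_reverse] at h'

theorem scAux_filter {c : ℕ} {p : V → Bool} :
    ∀ {l : List V}, (∀ v ∈ l, p v = false → c < col v) →
      scAux col c (l.filter p) = scAux col c l
  | [], _ => rfl
  | v :: l, h => by
    have ih := scAux_filter fun u hu => h u (List.mem_cons_of_mem v hu)
    by_cases hv : p v
    · simp only [List.filter_cons_of_pos hv, scAux, ih]
    · rw [List.filter_cons_of_neg hv, scAux, if_pos (h v List.mem_cons_self (by simpa using hv)),
        ih]

/-- Here `scAux col n l` is the length of the leading run of colour `n`, so the bound leaves
room for that run to grow up to `k - 1`. -/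
theorem length_add_le_of_scAux_top_lt {n k : ℕ} :
    ∀ {l : List V}, (∀ v ∈ l, col v ≤ n) → (∀ s, s <:+ l → scAux col n s < k) →
      l.length + k ≤ k * ((l.filter (col · < n)).length + 1) + scAux col n l
  | [], _, _ => by simp
  | v :: l, hcol, hsc => by
    have ih := length_add_le_of_scAux_top_lt (fun u hu => hcol u (List.mem_cons_of_mem v hu))
      fun s hs => hsc s (hs.trans (List.suffix_cons v l))
    have htail : scAux col n l < k := hsc l (List.suffix_cons v l)
    rcases (hcol v List.mem_cons_self).lt_or_eq with hv | hv
    · simp only [List.filter_cons, hv, decide_true, if_true, scAux, if_neg hv.not_gt, hv.ne,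
        if_false, List.length_cons]
      nlinarith
    · simp only [List.filter_cons, hv, lt_irrefl, decide_false, Bool.false_eq_true, scAux, if_true,
        if_false, List.length_cons]
      omega

theorem length_lt_pow_of_scAux_lt {k : ℕ} :
    ∀ {n : ℕ} {l : List V}, (∀ v ∈ l, col v < n) →
      (∀ c < n, ∀ s, s <:+ l → scAux col c s < k) → l.length < k ^ n
  | 0, [], _, _ => by simp
  | 0, v :: _, hcol, _ => absurd (hcol v List.mem_cons_self) (Nat.not_lt_zero _)
  | n + 1, l, hcol, hsc => by
    have hfilter : (l.filter (col · < n)).length < k ^ n := by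
      refine length_lt_pow_of_scAux_lt (fun v hv => by simpa using (List.mem_filter.mp hv).2) ?_
      intro c hc s hs
      obtain ⟨t, ht, rfl⟩ := List.suffix_filter_iff.mp hs
      rw [scAux_filter col fun v _ hv => by simp at hv; omega]
      exact hsc c (by omega) t ht
    have htop := length_add_le_of_scAux_top_lt col (fun v hv => Nat.le_of_lt_succ (hcol v hv))
      (hsc n n.lt_succ_self)
    have hl := hsc n n.lt_succ_self l List.suffix_rfl
    calc l.length < k * ((l.filter (col · < n)).length + 1) := by omega
      _ ≤ k * k ^ n := Nat.mul_le_mul_left k hfilter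
      _ = k ^ (n + 1) := (pow_succ' k n).symm

end

theorem stmt0_general (n k : ℕ) {V : Type*} (col : V → ℕ)
    (hcol : ∀ v, col v < n) (w : List V) (hw : k ^ n ≤ w.length) :
    ∃ c < n, k ≤ MaxSc col c w := by
  by_contra! h
  have hlt := length_lt_pow_of_scAux_lt col (l := w.reverse) (fun v _ => hcol v)
    fun c hc s hs => (scAux_le_maxSc col hs).trans_lt (h c hc)
  rw [List.length_reverse] at hlt
  omega

/-- Lemma 1: every word of length at least `k ^ n` reaches score `k` for some
color `c ∈ [n]`. -/
theorem stmt0 (n k : ℕ) (hk : 1 ≤ k) {V : Type*} (col : V → ℕ)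
    (hcol : ∀ v, col v < n) (w : List V) (hw : k ^ n ≤ w.length) :
    ∃ c < n, k ≤ MaxSc col c w :=
  stmt0_general n k col hcol w hw

end FDGames
end

section
/- For every n ≥ 1 and every k ≥ 1 there exists a word u over the alphabet [n] (taking V = [n] with the identity coloring) of length |u| = k^n − 1 such that MaxSc_c(u) < k for every c ∈ [n]. Hence the bound k^n in the score-threshold lemma is tight. -/
/-!
Over the colors `c, …, c + m - 1` take `u = (u' c)^(k-1) u'`, where `u'` is the word built in the
same way over `c + 1, …, c + m - 1`; its length is `k (k^(m-1) - 1) + (k - 1) = k^m - 1`.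
A color below `c` does not occur in `u`, and `c` occurs only `k - 1` times, so their scores
stay below `k`. For a color `d > c` every letter `c` resets `Sc_d`, so every prefix of `u` has
at most the `d`-score of a prefix of `u'`, which is below `k` by induction.
-/

namespace FDGames


section Scores

variable {V : Type*} (col : V → ℕ) (d : ℕ)

lemma scAux_le_countP (l : List V) : scAux col d l ≤ l.countP (fun v => col v = d) := by
  induction l with
  | nil => exact le_rfl
  | cons v l ih =>
    simp only [scAux, List.countP_cons]
    split_ifs <;> simp_all

lemma scAux_append_cons_le {v : V} (hv : col v < d) (l₁ l₂ : List V) :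
    scAux col d (l₁ ++ v :: l₂) ≤ scAux col d l₁ := by
  induction l₁ with
  | nil => simp [scAux, hv.not_gt, hv.ne]
  | cons u l ih => simp only [List.cons_append, scAux]; split_ifs <;> omega

lemma sc_le_countP (w : List V) : Sc col d w ≤ w.countP (fun v => col v = d) := by
  simpa [Sc] using scAux_le_countP col d w.reverse

lemma sc_append_cons_le {v : V} (hv : col v < d) (w₁ w₂ : List V) :
    Sc col d (w₁ ++ v :: w₂) ≤ Sc col d w₂ := by
  simpa [Sc] using scAux_append_cons_le col d hv w₂.reverse w₁.reverse

lemma maxSc_le_iff {w : List V} {a : ℕ} :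
    MaxSc col d w ≤ a ↔ ∀ m, Sc col d (w.take m) ≤ a := by
  refine Finset.sup_le_iff.trans ⟨fun h m => ?_, fun h m _ => h m⟩
  rw [List.take_eq_take_min]
  exact h _ (Finset.mem_range_succ_iff.2 (min_le_right _ _))

lemma maxSc_le_countP (w : List V) : MaxSc col d w ≤ w.countP (fun v => col v = d) :=
  (maxSc_le_iff col d).2 fun m =>
    (sc_le_countP col d _).trans (List.take_sublist m w).countP_le

lemma maxSc_append_cons_le {v : V} (hv : col v < d) (w₁ w₂ : List V) :
    MaxSc col d (w₁ ++ v :: w₂) ≤ max (MaxSc col d w₁) (MaxSc col d w₂) := by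
  rw [maxSc_le_iff]
  intro m
  rw [List.take_append]
  rcases Nat.lt_or_ge w₁.length m with h | h
  · obtain ⟨m', hm'⟩ : ∃ m', m - w₁.length = m' + 1 := ⟨m - w₁.length - 1, by omega⟩
    rw [hm', List.take_succ_cons, List.take_of_length_le (by omega)]
    exact (sc_append_cons_le col d hv _ _).trans
      (le_max_of_le_right ((maxSc_le_iff col d).1 le_rfl m'))
  · rw [Nat.sub_eq_zero_of_le h, List.take_zero, List.append_nil]
    exact le_max_of_le_left ((maxSc_le_iff col d).1 le_rfl m)

lemma maxSc_flatten_replicate_append_le {v : V} (hv : col v < d) (w : List V) (j : ℕ) :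
    MaxSc col d ((List.replicate j (w ++ [v])).flatten ++ w) ≤ MaxSc col d w := by
  induction j with
  | zero => simp
  | succ j ih =>
    rw [List.replicate_succ, List.flatten_cons, List.append_assoc, List.append_assoc,
      List.singleton_append]
    exact (maxSc_append_cons_le col d hv _ _).trans (max_le le_rfl ih)

end Scores

def tightWord (k : ℕ) : ℕ → ℕ → List ℕ
  | 0, _ => []
  | m + 1, c =>
    (List.replicate (k - 1) (tightWord k m (c + 1) ++ [c])).flatten ++ tightWord k m (c + 1)

lemma length_tightWord {k : ℕ} (hk : 1 ≤ k) (m c : ℕ) :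
    (tightWord k m c).length = k ^ m - 1 := by
  induction m generalizing c with
  | zero => rfl
  | succ m ih =>
    obtain ⟨j, rfl⟩ : ∃ j, k = j + 1 := ⟨k - 1, by omega⟩
    have hpos : 1 ≤ (j + 1) ^ m := Nat.one_le_pow _ _ hk
    simp only [tightWord, List.length_append, List.length_flatten, List.map_replicate,
      List.sum_replicate, List.length_singleton, ih, Nat.add_sub_cancel, smul_eq_mul,
      Nat.sub_add_cancel hpos, pow_succ]
    rw [mul_add_one, mul_comm]
    omega

lemma mem_tightWord {k m c v : ℕ} (h : v ∈ tightWord k m c) : c ≤ v ∧ v < c + m := by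
  induction m generalizing c with
  | zero => simp [tightWord] at h
  | succ m ih =>
    simp only [tightWord, List.mem_append, List.mem_flatten, List.mem_replicate, ne_eq,
      ↓existsAndEq, and_true, List.mem_cons, List.not_mem_nil, or_false] at h
    rcases h with ⟨-, h | rfl⟩ | h
    · have := ih h; omega
    · omega
    · have := ih h; omega

lemma maxSc_tightWord_le (k m c d : ℕ) : MaxSc id d (tightWord k m c) ≤ k - 1 := by
  induction m generalizing c with
  | zero => simp [tightWord, MaxSc, Sc, scAux]
  | succ m ih =>
    rcases lt_or_ge c d with hcd | hdc
    · exact (maxSc_flatten_replicate_append_le id d hcd _ _).trans (ih _)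
    · have hb : (tightWord k m (c + 1)).countP (fun v => v = d) = 0 :=
        List.countP_eq_zero.2 fun v hv => by
          have := mem_tightWord hv
          simp only [decide_eq_true_eq]
          omega
      refine (maxSc_le_countP id d _).trans ?_
      simp only [tightWord, id_eq, List.countP_append, List.countP_flatten, List.map_replicate,
        List.sum_replicate, List.countP_singleton, hb, smul_eq_mul]
      split_ifs <;> simp

theorem stmt1_general (n k : ℕ) (hk : 1 ≤ k) :
    ∃ u : List ℕ, (∀ x ∈ u, x < n) ∧ u.length = k ^ n - 1 ∧
      ∀ c < n, MaxSc id c u < k :=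
  ⟨tightWord k n 0, fun _ hx => by simpa using (mem_tightWord hx).2, length_tightWord hk n 0,
    fun c _ => (maxSc_tightWord_le k n 0 c).trans_lt (by omega)⟩

/-- Tightness of Lemma 1: over the alphabet `[n]` with the identity coloring,
there is a word of length `k ^ n - 1` all of whose scores stay below `k`. -/
theorem stmt1 (n k : ℕ) (hn : 1 ≤ n) (hk : 1 ≤ k) :
    ∃ u : List ℕ, (∀ x ∈ u, x < n) ∧ u.length = k ^ n - 1 ∧
      ∀ c < n, MaxSc id c u < k :=
  stmt1_general n k hk

end FDGames
end

section
/- Let (G, col) be a parity game on a finite game graph with vertex set V and coloring col : V → [n], let i ∈ {0,1}, and let σ be a positional winning strategy for Player i. Then every play ρ consistent with σ satisfies MaxSc_c(ρ) ≤ |V|_c for every c ∈ [n] with Par(c) = 1 − i, where |V|_c = |{v ∈ V : col(v) = c}| and Par(c) is 0 if c is even and 1 if c is odd. -/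
/-!
If the score of `c` after some prefix of `ρ` exceeded the number of vertices of color `c`, then
within the window counted by the score (where no color below `c` occurs) some vertex of color `c`
would be visited twice, at times `q₁ < q₂`. Since `σ` is positional, repeating the segment
`ρ[q₁, q₂)` forever is again a play consistent with `σ`, and its least color seen infinitely often
is `c`, which has the parity of the opponent of Player `i`, contradicting that `σ` is winning.
-/

namespace FDGames


/-- A game graph: ownership partition, edge relation, initial vertex, and
every vertex has at least one successor. -/
structure GameGraph (V : Type*) where
  own : V → Fin 2
  E : V → V → Prop
  vin : V
  succ : ∀ v, ∃ v', E v v'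

/-- An infinite play: starts at the initial vertex and follows edges. -/
def IsPlay {V : Type*} (G : GameGraph V) (ρ : ℕ → V) : Prop :=
  ρ 0 = G.vin ∧ ∀ m, G.E (ρ m) (ρ (m + 1))

/-- A play consistent with the strategy `σ` of Player `i`; the strategy gets the
history (the vertices strictly before the current one) and the current vertex. -/
def ConsistentPlay {V : Type*} (G : GameGraph V) (i : Fin 2)
    (σ : List V → V → V) (ρ : ℕ → V) : Prop :=
  IsPlay G ρ ∧ ∀ m, G.own (ρ m) = i → ρ (m + 1) = σ ((List.range m).map ρ) (ρ m)

/-- The minimal color seen infinitely often along `ρ`. -/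
noncomputable def minInfCol {V : Type*} (col : V → ℕ) (ρ : ℕ → V) : ℕ :=
  sInf {c | ∀ N, ∃ m, N ≤ m ∧ col (ρ m) = c}

/-- The play `ρ` is winning for Player `i` in the (min-) parity game. -/
def WinningPlay {V : Type*} (col : V → ℕ) (i : Fin 2) (ρ : ℕ → V) : Prop :=
  minInfCol col ρ % 2 = (i : ℕ)

/-- A (legal) strategy always moves along edges. -/
def IsStrategy {V : Type*} (G : GameGraph V) (σ : List V → V → V) : Prop :=
  ∀ h v, G.E v (σ h v)

/-- A positional strategy only depends on the current vertex. -/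
def Positional {V : Type*} (σ : List V → V → V) : Prop :=
  ∀ h h' v, σ h v = σ h' v

/-- A winning strategy for Player `i` in the parity game `(G, col)`. -/
def WinningStrategy {V : Type*} (G : GameGraph V) (col : V → ℕ) (i : Fin 2)
    (σ : List V → V → V) : Prop :=
  IsStrategy G σ ∧ ∀ ρ, ConsistentPlay G i σ ρ → WinningPlay col i ρ

/-- Player `i` wins the parity game `(G, col)`. -/
def WinsGame {V : Type*} (G : GameGraph V) (col : V → ℕ) (i : Fin 2) : Prop :=
  ∃ σ, WinningStrategy G col i σ

theorem Sc_map_range_succ {V : Type*} (col : V → ℕ) (c : ℕ) (ρ : ℕ → V) (m : ℕ) :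
    Sc col c ((List.range (m + 1)).map ρ) =
      if c < col (ρ m) then Sc col c ((List.range m).map ρ)
      else if col (ρ m) = c then Sc col c ((List.range m).map ρ) + 1
      else 0 := by
  simp [Sc, List.range_succ, scAux]

theorem exists_window_Sc_eq_card {V : Type*} (col : V → ℕ) (c : ℕ) (ρ : ℕ → V) (m : ℕ) :
    ∃ p ≤ m, (∀ q ∈ Finset.Ico p m, c ≤ col (ρ q)) ∧
      ((Finset.Ico p m).filter fun q => col (ρ q) = c).card
        = Sc col c ((List.range m).map ρ) := by
  induction m with
  | zero => exact ⟨0, le_rfl, by simp, by simp [Sc, scAux]⟩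
  | succ m ih =>
    obtain ⟨p, hpm, hge, hcard⟩ := ih
    rw [Sc_map_range_succ]
    by_cases hlow : col (ρ m) < c
    · refine ⟨m + 1, le_rfl, by simp, ?_⟩
      rw [if_neg (by omega), if_neg (by omega)]
      simp
    · have hge' : ∀ q ∈ Finset.Ico p (m + 1), c ≤ col (ρ q) := by
        intro q hq
        rw [Nat.Ico_succ_right_eq_insert_Ico hpm, Finset.mem_insert] at hq
        rcases hq with rfl | hq
        · omega
        · exact hge q hq
      refine ⟨p, by omega, hge', ?_⟩
      rw [Nat.Ico_succ_right_eq_insert_Ico hpm, Finset.filter_insert]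
      by_cases hc : col (ρ m) = c
      · rw [if_pos hc, Finset.card_insert_of_notMem (by simp), hcard,
          if_neg (by omega), if_pos hc]
      · rw [if_neg hc, hcard, if_pos (by omega)]

theorem exists_repeat_of_card_lt_Sc {V : Type*} [Fintype V] (col : V → ℕ) (c : ℕ)
    (ρ : ℕ → V) (m : ℕ)
    (hlt : (Finset.univ.filter fun v => col v = c).card < Sc col c ((List.range m).map ρ)) :
    ∃ q₁ q₂, q₁ < q₂ ∧ ρ q₁ = ρ q₂ ∧ col (ρ q₁) = c ∧
      ∀ q ∈ Finset.Ico q₁ q₂, c ≤ col (ρ q) := by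
  obtain ⟨p, -, hge, hcard⟩ := exists_window_Sc_eq_card col c ρ m
  rw [← hcard] at hlt
  obtain ⟨x, hx, y, hy, hxy, hρxy⟩ := Finset.exists_ne_map_eq_of_card_lt_of_maps_to hlt
    (f := ρ) (fun q hq => by simp_all)
  simp only [Finset.mem_filter, Finset.mem_Ico] at hx hy
  have hwindow : ∀ a b, p ≤ a → b < m → ∀ q ∈ Finset.Ico a b, c ≤ col (ρ q) := by
    intro a b ha hb q hq
    simp only [Finset.mem_Ico] at hq
    exact hge q (Finset.mem_Ico.mpr ⟨by omega, by omega⟩)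
  rcases hxy.lt_or_gt with h | h
  · exact ⟨x, y, h, hρxy, hx.2, hwindow x y hx.1.1 hy.1.2⟩
  · exact ⟨y, x, h, hρxy.symm, hy.2, hwindow y x hy.1.1 hx.1.2⟩

/-- Time reindexing that runs through `[0, q₁)` and then cycles through `[q₁, q₂)`; when
`ρ q₁ = ρ q₂` it turns `ρ` into the lasso play `ρ[0, q₁) ρ[q₁, q₂)^ω`. -/
def loopIndex (q₁ q₂ k : ℕ) : ℕ :=
  if k < q₁ then k else q₁ + (k - q₁) % (q₂ - q₁)

theorem loopIndex_zero (q₁ q₂ : ℕ) : loopIndex q₁ q₂ 0 = 0 := by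
  unfold loopIndex
  split_ifs with h
  · rfl
  · simp [Nat.eq_zero_of_not_pos h]

theorem loopIndex_mem_Ico {q₁ q₂ k : ℕ} (hq : q₁ < q₂) (hk : q₁ ≤ k) :
    loopIndex q₁ q₂ k ∈ Finset.Ico q₁ q₂ := by
  have := Nat.mod_lt (k - q₁) (Nat.sub_pos_of_lt hq)
  simp only [loopIndex, if_neg (Nat.not_lt.mpr hk), Finset.mem_Ico]
  omega

theorem loopIndex_add_mul (q₁ q₂ j : ℕ) : loopIndex q₁ q₂ (q₁ + (q₂ - q₁) * j) = q₁ := by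
  simp [loopIndex]

theorem loopIndex_succ (q₁ q₂ k : ℕ) :
    loopIndex q₁ q₂ (k + 1) = loopIndex q₁ q₂ k + 1 ∨
      (loopIndex q₁ q₂ k + 1 = q₂ ∧ loopIndex q₁ q₂ (k + 1) = q₁) := by
  unfold loopIndex
  by_cases hk : k < q₁
  · left
    rw [if_pos hk]
    split_ifs
    · rfl
    · rw [show k + 1 - q₁ = 0 by omega, Nat.zero_mod]
      omega
  · rw [if_neg hk, if_neg (by omega), show k + 1 - q₁ = k - q₁ + 1 by omega]
    rcases Nat.eq_zero_or_pos (q₂ - q₁) with hd | hd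
    · left
      simp only [hd, Nat.mod_zero]
      omega
    · have hr := Nat.mod_lt (k - q₁) hd
      rcases (show (k - q₁) % (q₂ - q₁) + 1 ≤ q₂ - q₁ from hr).lt_or_eq with hr' | hr'
      · left
        rw [← Nat.mod_add_mod, Nat.mod_eq_of_lt hr']
        omega
      · right
        rw [← Nat.mod_add_mod, hr', Nat.mod_self]
        omega

theorem ConsistentPlay.comp_loopIndex {V : Type*} {G : GameGraph V} {i : Fin 2}
    {σ : List V → V → V} {ρ : ℕ → V} {q₁ q₂ : ℕ} (hpos : Positional σ)
    (hρ : ConsistentPlay G i σ ρ) (hq : ρ q₁ = ρ q₂) :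
    ConsistentPlay G i σ (ρ ∘ loopIndex q₁ q₂) := by
  obtain ⟨⟨hinit, hedge⟩, hmove⟩ := hρ
  have hstep : ∀ k, ρ (loopIndex q₁ q₂ (k + 1)) = ρ (loopIndex q₁ q₂ k + 1) := by
    intro k
    rcases loopIndex_succ q₁ q₂ k with h | ⟨h, h'⟩
    · rw [h]
    · rw [h, h', hq]
  refine ⟨⟨by simp [loopIndex_zero, hinit], fun k => ?_⟩, fun k hown => ?_⟩
  · simpa [hstep] using hedge (loopIndex q₁ q₂ k)
  · rw [Function.comp_apply, hstep, hmove _ hown]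
    exact hpos _ _ _

theorem minInfCol_eq {V : Type*} {col : V → ℕ} {ρ : ℕ → V} {c : ℕ} (N : ℕ)
    (hinf : ∀ M, ∃ k, M ≤ k ∧ col (ρ k) = c) (hge : ∀ k, N ≤ k → c ≤ col (ρ k)) :
    minInfCol col ρ = c := by
  refine le_antisymm (Nat.sInf_le hinf) (le_csInf ⟨c, hinf⟩ fun c' hc' => ?_)
  obtain ⟨k, hk, rfl⟩ := hc' N
  exact hge k hk

theorem stmt3_general {V : Type*} [Fintype V] (G : GameGraph V) (col : V → ℕ)
    (i : Fin 2) (σ : List V → V → V)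
    (hpos : Positional σ) (hwin : WinningStrategy G col i σ)
    (ρ : ℕ → V) (hρ : ConsistentPlay G i σ ρ)
    (c : ℕ) (hpar : c % 2 = 1 - (i : ℕ)) (m : ℕ) :
    Sc col c ((List.range m).map ρ) ≤ (Finset.univ.filter fun v => col v = c).card := by
  by_contra! hlt
  obtain ⟨q₁, q₂, hq, hρq, hcolq, hge⟩ := exists_repeat_of_card_lt_Sc col c ρ m hlt
  have hmin : minInfCol col (ρ ∘ loopIndex q₁ q₂) = c := by
    refine minInfCol_eq q₁ (fun M => ⟨q₁ + (q₂ - q₁) * M, ?_, ?_⟩) fun k hk => ?_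
    · nlinarith [Nat.sub_pos_of_lt hq]
    · simp [loopIndex_add_mul, hcolq]
    · exact hge _ (loopIndex_mem_Ico hq hk)
  have hwins := hwin.2 _ (hρ.comp_loopIndex hpos hρq)
  rw [WinningPlay, hmin] at hwins
  omega

/-- Remark 1: a positional winning strategy for Player `i` in a parity game on a
finite game graph bounds the scores of the colors of the losing player's parity
by the number of vertices of that color. -/
theorem stmt3 {V : Type*} [Fintype V] (n : ℕ) (G : GameGraph V) (col : V → ℕ)
    (hcol : ∀ v, col v < n) (i : Fin 2) (σ : List V → V → V)
    (hpos : Positional σ) (hwin : WinningStrategy G col i σ)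
    (ρ : ℕ → V) (hρ : ConsistentPlay G i σ ρ)
    (c : ℕ) (hc : c < n) (hpar : c % 2 = 1 - (i : ℕ)) (m : ℕ) :
    Sc col c ((List.range m).map ρ) ≤ (Finset.univ.filter fun v => col v = c).card :=
  stmt3_general G col i σ hpos hwin ρ hρ c hpar m

end FDGames
end

section
/- Let G be a finite game graph with vertex set V and coloring col : V → [n], and let |V|_c = |{v ∈ V : col(v) = c}|. For every threshold k > max_{c ∈ [n]} |V|_c and each i ∈ {0,1}: Player i wins the parity game (G, col) if and only if Player i wins the finite-time parity game (G, col, k). -/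
namespace FDGames

/-- A finite play prefix `w` is consistent with the strategy `σ` of Player `i`. -/
def FinConsistent {V : Type*} (G : GameGraph V) (i : Fin 2)
    (σ : List V → V → V) (w : List V) : Prop :=
  ∀ m, m + 1 < w.length → G.own (w.getD m G.vin) = i →
    w.getD (m + 1) G.vin = σ (w.take m) (w.getD m G.vin)

/-- A finite path from the initial vertex. -/
def FinPath {V : Type*} (G : GameGraph V) (w : List V) : Prop :=
  w.head? = some G.vin ∧ w.Chain' G.E

/-- A play of the finite-time parity game `(G, col, k)` (with colors in `[n]`):
a finite path from the initial vertex along which some score reaches the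
threshold `k` exactly at the last vertex. -/
def FTPlay {V : Type*} (G : GameGraph V) (col : V → ℕ) (n k : ℕ) (w : List V) : Prop :=
  FinPath G w ∧ (∃ c < n, MaxSc col c w = k) ∧ ∀ c < n, MaxSc col c w.dropLast < k

/-- The finished finite-time play `w` is winning for Player `i`. -/
def FTWinningPlay {V : Type*} (col : V → ℕ) (n k : ℕ) (i : Fin 2) (w : List V) : Prop :=
  ∃ c < n, MaxSc col c w = k ∧ c % 2 = (i : ℕ)

/-- Player `i` wins the finite-time parity game `(G, col, k)`. -/
def FTWins {V : Type*} (G : GameGraph V) (col : V → ℕ) (n k : ℕ) (i : Fin 2) : Prop :=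
  ∃ σ, IsStrategy G σ ∧
    ∀ w, FTPlay G col n k w → FinConsistent G i σ w → FTWinningPlay col n k i w

/-!
Finite parity games are positionally determined (Zielonka). A positional winning strategy of the
parity game also wins the finite-time game: if a consistent finite-time play were won by a color
`c` of the other parity, its score `k` of `c` exceeds the number of `c`-colored vertices, so the
final stretch of colors `≥ c` that produced it repeats a `c`-colored vertex; going around that
loop forever is a play consistent with the positional strategy whose minimal recurring color is
`c`. Conversely neither game has two winners: two opposing strategies produce one infinite play,
and one of its prefixes, stopped when a score first reaches `k`, is a finite-time play.
-/

open Filter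

theorem Fin.val_rev_ne_val (i : Fin 2) : (i.rev : ℕ) ≠ i := by
  rw [Fin.val_rev]; omega

theorem Fin.rev_ne (i : Fin 2) : i.rev ≠ i :=
  fun h => Fin.val_rev_ne_val i (congrArg Fin.val h)

theorem Fin.eq_or_eq_rev (i j : Fin 2) : j = i ∨ j = i.rev := by
  revert i j; decide

theorem Fin.eq_of_ne_of_ne {a b c : Fin 2} (hab : a ≠ b) (hbc : b ≠ c) : a = c := by
  revert a b c; decide

section Scores

variable {V : Type*} (col : V → ℕ) (c : ℕ)

theorem Sc_nil : Sc col c ([] : List V) = 0 := rfl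

theorem Sc_concat (w : List V) (v : V) :
    Sc col c (w ++ [v]) =
      if c < col v then Sc col c w else if col v = c then Sc col c w + 1 else 0 := by
  simp [Sc, scAux]

theorem Sc_concat_le (w : List V) (v : V) : Sc col c (w ++ [v]) ≤ Sc col c w + 1 := by
  rw [Sc_concat]; split_ifs <;> omega

theorem Sc_le_Sc_concat {w : List V} {v : V} (hv : c ≤ col v) :
    Sc col c w ≤ Sc col c (w ++ [v]) := by
  rw [Sc_concat]; split_ifs <;> omega

theorem Sc_concat_of_col_eq {w : List V} {v : V} (hv : col v = c) :
    Sc col c (w ++ [v]) = Sc col c w + 1 := by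
  rw [Sc_concat, if_neg (by omega), if_pos hv]

theorem exists_append_countP_eq_Sc (w : List V) :
    ∃ p u : List V, w = p ++ u ∧ (∀ x ∈ u, c ≤ col x) ∧
      u.countP (fun x => col x = c) = Sc col c w := by
  induction w using List.reverseRecOn with
  | nil => exact ⟨[], [], rfl, by simp, rfl⟩
  | append_singleton w v ih =>
    obtain ⟨p, u, rfl, hu, hcount⟩ := ih
    rw [Sc_concat]
    split_ifs with hlt heq
    · refine ⟨p, u ++ [v], by simp, by simpa [or_imp, forall_and] using ⟨hu, hlt.le⟩, ?_⟩
      simp [List.countP_append, hcount, hlt.ne']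
    · refine ⟨p, u ++ [v], by simp, by simpa [or_imp, forall_and] using ⟨hu, heq.ge⟩, ?_⟩
      simp [List.countP_append, hcount, heq]
    · exact ⟨p ++ u ++ [v], [], by simp, by simp, rfl⟩

theorem MaxSc_nil : MaxSc col c ([] : List V) = 0 := by
  simp [MaxSc, Sc_nil]

theorem Sc_le_MaxSc (w : List V) : Sc col c w ≤ MaxSc col c w := by
  conv_lhs => rw [← List.take_length (l := w)]
  exact Finset.le_sup (f := fun m => Sc col c (w.take m)) (Finset.self_mem_range_succ w.length)

theorem MaxSc_concat (w : List V) (v : V) :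
    MaxSc col c (w ++ [v]) = max (MaxSc col c w) (Sc col c (w ++ [v])) := by
  have hprefix : ∀ m ∈ Finset.range (w.length + 1),
      Sc col c ((w ++ [v]).take m) = Sc col c (w.take m) := fun m hm => by
    rw [List.take_append_of_le_length (by simpa [Nat.lt_succ_iff] using hm)]
  simp only [MaxSc, List.length_append, List.length_singleton,
    Finset.range_add_one (n := w.length + 1), Finset.sup_insert]
  rw [Finset.sup_congr rfl hprefix, List.take_of_length_le (by simp)]
  exact sup_comm _ _

theorem MaxSc_le_MaxSc_dropLast_add_one (w : List V) :
    MaxSc col c w ≤ MaxSc col c w.dropLast + 1 := by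
  rcases List.eq_nil_or_concat' w with rfl | ⟨w, v, rfl⟩
  · simp [MaxSc_nil]
  · rw [List.dropLast_concat, MaxSc_concat]
    have := Sc_concat_le col c w v
    have := Sc_le_MaxSc col c w
    omega

theorem Sc_eq_MaxSc_of_MaxSc_dropLast_lt {w : List V}
    (h : MaxSc col c w.dropLast < MaxSc col c w) : Sc col c w = MaxSc col c w := by
  rcases List.eq_nil_or_concat' w with rfl | ⟨w, v, rfl⟩
  · simp at h
  · rw [List.dropLast_concat] at h
    rw [MaxSc_concat] at h ⊢
    omega

theorem col_getLast_of_MaxSc_dropLast_lt {w : List V} (hw : w ≠ [])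
    (h : MaxSc col c w.dropLast < MaxSc col c w) : col (w.getLast hw) = c := by
  obtain ⟨w, v, rfl⟩ := (List.eq_nil_or_concat' w).resolve_left hw
  have hsc := Sc_eq_MaxSc_of_MaxSc_dropLast_lt col c h
  rw [List.dropLast_concat] at h
  rw [MaxSc_concat] at h hsc
  have := Sc_le_MaxSc col c w
  rw [List.getLast_concat]
  rw [Sc_concat] at h hsc
  split_ifs at h hsc with hlt heq <;> omega

end Scores

section InfiniteColors

variable {V : Type*} (col : V → ℕ) (ρ : ℕ → V)

theorem minInfCol_le {c : ℕ} (h : ∃ᶠ m in atTop, col (ρ m) = c) : minInfCol col ρ ≤ c :=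
  Nat.sInf_le (frequently_atTop.mp h)

theorem minInfCol_eq_of_frequently {c : ℕ} (hfreq : ∃ᶠ m in atTop, col (ρ m) = c)
    (hge : ∀ᶠ m in atTop, c ≤ col (ρ m)) : minInfCol col ρ = c := by
  refine le_antisymm (minInfCol_le col ρ hfreq) (le_csInf ⟨c, frequently_atTop.mp hfreq⟩ ?_)
  intro c' hc'
  obtain ⟨m, hm, hle⟩ := ((frequently_atTop.mpr hc').and_eventually hge).exists
  exact hm ▸ hle

theorem frequently_col_eq_minInfCol [Finite V] :
    ∃ᶠ m in atTop, col (ρ m) = minInfCol col ρ := by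
  obtain ⟨v, hv⟩ := Finite.exists_infinite_fiber ρ
  have hv : ∃ᶠ m in atTop, col (ρ m) = col v :=
    (Nat.frequently_atTop_iff_infinite.mpr (Set.infinite_coe_iff.mp hv)).mono fun m hm => by
      rw [Set.mem_singleton_iff.mp hm]
  exact frequently_atTop.mpr (Nat.sInf_mem (s := {c | ∀ N, ∃ m, N ≤ m ∧ col (ρ m) = c})
    ⟨col v, frequently_atTop.mp hv⟩)

theorem eventually_minInfCol_le : ∀ᶠ m in atTop, minInfCol col ρ ≤ col (ρ m) := by
  have hrare : ∀ c ∈ Set.Iio (minInfCol col ρ), ∀ᶠ m in atTop, col (ρ m) ≠ c := fun c hc => by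
    rw [← not_frequently]
    exact fun hfreq => (minInfCol_le col ρ hfreq).not_gt hc
  filter_upwards [(eventually_all_finite (Set.finite_Iio _)).mpr hrare] with m hm
  exact not_lt.mp fun hlt => hm _ hlt rfl

end InfiniteColors

section Plays

variable {V : Type*} (G : GameGraph V)

theorem finPath_map_range {ρ : ℕ → V} (hρ : IsPlay G ρ) {T : ℕ} (hT : 0 < T) :
    FinPath G ((List.range T).map ρ) := by
  refine ⟨?_, ?_⟩
  · obtain ⟨T, rfl⟩ := Nat.exists_eq_add_one_of_ne_zero hT.ne'
    simp [List.range_succ_eq_map, hρ.1]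
  · rw [List.Chain', List.isChain_map, List.isChain_range]
    exact fun m _ => hρ.2 m

theorem finConsistent_map_range {i : Fin 2} {σ : List V → V → V} {ρ : ℕ → V}
    (hρ : ConsistentPlay G i σ ρ) (T : ℕ) : FinConsistent G i σ ((List.range T).map ρ) := by
  intro m hm hown
  simp only [List.length_map, List.length_range] at hm
  simp only [List.getD_eq_getElem?_getD, List.getElem?_map, List.getElem?_range (by omega : m < T),
    List.getElem?_range hm, Option.map_some, Option.getD_some, ← List.map_take, List.take_range,
    min_eq_left (by omega : m ≤ T)] at hown ⊢
  exact hρ.2 m hown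

theorem exists_seq_of_history (v₀ : V) (next : List V → V → V) :
    ∃ ρ : ℕ → V, ρ 0 = v₀ ∧ ∀ m, ρ (m + 1) = next ((List.range m).map ρ) (ρ m) := by
  let state : ℕ → List V × V := fun m =>
    Nat.rec ([], v₀) (fun _ st => (st.1 ++ [st.2], next st.1 st.2)) m
  have hhist : ∀ m, (state m).1 = (List.range m).map fun m => (state m).2 := by
    intro m
    induction m with
    | zero => rfl
    | succ m ih => simp [state, List.range_succ, ← ih]
  exact ⟨fun m => (state m).2, rfl, fun m => by simp [state, ← hhist]⟩

theorem exists_consistentPlay_rev {σ τ : List V → V → V} (hσ : IsStrategy G σ)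
    (hτ : IsStrategy G τ) (i : Fin 2) :
    ∃ ρ, ConsistentPlay G i σ ρ ∧ ConsistentPlay G i.rev τ ρ := by
  obtain ⟨ρ, h0, hstep⟩ := exists_seq_of_history G.vin
    fun h v => if G.own v = i then σ h v else τ h v
  have hplay : IsPlay G ρ := ⟨h0, fun m => by rw [hstep]; split_ifs; exacts [hσ _ _, hτ _ _]⟩
  refine ⟨ρ, ⟨hplay, fun m hown => by rw [hstep, if_pos hown]⟩, hplay, fun m hown => ?_⟩
  rw [hstep, if_neg (by rw [hown]; exact Fin.rev_ne i)]

theorem not_winsGame_and_winsGame_rev (col : V → ℕ) (i : Fin 2) :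
    ¬ (WinsGame G col i ∧ WinsGame G col i.rev) := by
  rintro ⟨⟨σ, hσ, hσwin⟩, ⟨τ, hτ, hτwin⟩⟩
  obtain ⟨ρ, hρσ, hρτ⟩ := exists_consistentPlay_rev G hσ hτ i
  exact Fin.val_rev_ne_val i ((hτwin ρ hρτ).symm.trans (hσwin ρ hρσ))

end Plays

theorem exists_le_of_frequently_add_one {a : ℕ → ℕ} (hmono : ∀ᶠ m in atTop, a m ≤ a (m + 1))
    (hinc : ∃ᶠ m in atTop, a (m + 1) = a m + 1) (j : ℕ) : ∃ m, j ≤ a m := by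
  obtain ⟨N, hN⟩ := eventually_atTop.mp hmono
  have hmon := monotoneOn_nat_Ici_of_le_succ hN
  suffices ∃ m ≥ N, j ≤ a m from this.imp fun _ => And.right
  induction j with
  | zero => exact ⟨N, le_rfl, Nat.zero_le _⟩
  | succ j ih =>
    obtain ⟨m, hm, hj⟩ := ih
    obtain ⟨m', hm', hinc'⟩ := frequently_atTop.mp hinc m
    exact ⟨m' + 1, by omega, by have := hmon hm (hm.trans hm') hm'; omega⟩

section FiniteTime

variable {V : Type*} (G : GameGraph V) (col : V → ℕ) {n k : ℕ}

theorem FTPlay.ne_nil {w : List V} (hw : FTPlay G col n k w) : w ≠ [] := by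
  rintro rfl
  simpa using hw.1.1

theorem FTPlay.Sc_eq {w : List V} (hw : FTPlay G col n k w) {c : ℕ} (hc : c < n)
    (hck : MaxSc col c w = k) : Sc col c w = k :=
  hck ▸ Sc_eq_MaxSc_of_MaxSc_dropLast_lt col c (hck ▸ hw.2.2 c hc)

theorem FTPlay.col_getLast {w : List V} (hw : FTPlay G col n k w) {c : ℕ} (hc : c < n)
    (hck : MaxSc col c w = k) : col (w.getLast (hw.ne_nil G col)) = c :=
  col_getLast_of_MaxSc_dropLast_lt col c _ (hck ▸ hw.2.2 c hc)

/-- The score of the minimal recurring color grows without bound. -/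
theorem exists_FTPlay_map_range [Finite V] (hcol : ∀ v, col v < n) (hk : 1 ≤ k) {ρ : ℕ → V}
    (hρ : IsPlay G ρ) : ∃ T, FTPlay G col n k ((List.range T).map ρ) := by
  classical
  have hprefix_succ : ∀ m, (List.range (m + 1)).map ρ = (List.range m).map ρ ++ [ρ m] := by
    simp [List.range_succ]
  have hreach : ∃ T, ∃ c < n, k ≤ MaxSc col c ((List.range T).map ρ) := by
    set c := minInfCol col ρ
    obtain ⟨m₀, hm₀⟩ := (frequently_col_eq_minInfCol col ρ).exists
    obtain ⟨T, hT⟩ := exists_le_of_frequently_add_one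
      (a := fun T => Sc col c ((List.range T).map ρ))
      ((eventually_minInfCol_le col ρ).mono fun m hm => by
        simpa only [hprefix_succ] using Sc_le_Sc_concat col c hm)
      ((frequently_col_eq_minInfCol col ρ).mono fun m hm => by
        simpa only [hprefix_succ] using Sc_concat_of_col_eq col c hm) k
    exact ⟨T, c, lt_of_eq_of_lt hm₀.symm (hcol _), hT.trans (Sc_le_MaxSc col c _)⟩
  obtain ⟨c, hc, hkc⟩ := Nat.find_spec hreach
  set T := Nat.find hreach
  have hT : T ≠ 0 := fun h => by rw [h, List.range_zero, List.map_nil, MaxSc_nil] at hkc; omega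
  have hbefore : ∀ c < n, MaxSc col c ((List.range T).map ρ).dropLast < k := by
    obtain ⟨t, ht⟩ := Nat.exists_eq_add_one_of_ne_zero hT
    intro c hc
    rw [ht, hprefix_succ, List.dropLast_concat]
    exact not_le.mp fun hle => (Nat.find_min' hreach ⟨c, hc, hle⟩).not_gt (by omega)
  refine ⟨T, finPath_map_range G hρ (Nat.pos_of_ne_zero hT), ⟨c, hc, le_antisymm ?_ hkc⟩, hbefore⟩
  have := MaxSc_le_MaxSc_dropLast_add_one col c ((List.range T).map ρ)
  have := hbefore c hc
  omega

theorem not_FTWins_and_FTWins_rev [Finite V] (hcol : ∀ v, col v < n) (hk : 1 ≤ k) (i : Fin 2) :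
    ¬ (FTWins G col n k i ∧ FTWins G col n k i.rev) := by
  rintro ⟨⟨σ, hσ, hσwin⟩, ⟨τ, hτ, hτwin⟩⟩
  obtain ⟨ρ, hρσ, hρτ⟩ := exists_consistentPlay_rev G hσ hτ i
  obtain ⟨T, hT⟩ := exists_FTPlay_map_range G col hcol hk hρσ.1
  obtain ⟨c₁, hc₁, hk₁, hpar₁⟩ := hσwin _ hT (finConsistent_map_range G hρσ T)
  obtain ⟨c₂, hc₂, hk₂, hpar₂⟩ := hτwin _ hT (finConsistent_map_range G hρτ T)
  have hc : c₁ = c₂ := (hT.col_getLast G col hc₁ hk₁).symm.trans (hT.col_getLast G col hc₂ hk₂)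
  exact Fin.val_rev_ne_val i (by rw [← hpar₁, ← hpar₂, hc])

end FiniteTime

section Lasso

/-- The position reached after `m` steps along `0, 1, …, q + d - 1` when every step to `q + d`
is replaced by a jump back to `q`. -/
def lassoIdx (q d m : ℕ) : ℕ := if m < q then m else q + (m - q) % d

variable {q d : ℕ}

theorem lassoIdx_zero : lassoIdx q d 0 = 0 := by
  unfold lassoIdx; split_ifs <;> simp_all

theorem lassoIdx_lt (hd : 0 < d) (m : ℕ) : lassoIdx q d m < q + d := by
  unfold lassoIdx; split_ifs
  · omega
  · have := Nat.mod_lt (m - q) hd; omega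

theorem le_lassoIdx {m : ℕ} (hm : q ≤ m) : q ≤ lassoIdx q d m := by
  unfold lassoIdx; split_ifs <;> omega

theorem lassoIdx_add_mul (M : ℕ) : lassoIdx q d (q + d * M) = q := by
  simp [lassoIdx]

theorem lassoIdx_succ (hd : 0 < d) (m : ℕ) :
    lassoIdx q d (m + 1) = lassoIdx q d m + 1 ∨
      (lassoIdx q d m + 1 = q + d ∧ lassoIdx q d (m + 1) = q) := by
  unfold lassoIdx
  by_cases hm : m < q
  · by_cases hm' : m + 1 < q
    · simp [hm, hm']
    · left; simp [hm, hm', show m + 1 - q = 0 by omega]; omega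
  · have hmod : (m + 1 - q) % d = ((m - q) % d + 1) % d := by
      rw [Nat.mod_add_mod, show m + 1 - q = m - q + 1 by omega]
    have := Nat.mod_lt (m - q) hd
    rw [if_neg (by omega), if_neg hm, hmod]
    rcases Nat.lt_or_ge ((m - q) % d + 1) d with hlt | hge
    · left; rw [Nat.mod_eq_of_lt hlt]; omega
    · right; rw [show (m - q) % d + 1 = d by omega, Nat.mod_self]; omega

end Lasso

section Pumping

variable {V : Type*} (G : GameGraph V)

theorem FinPath.getD_zero {w : List V} (hw : FinPath G w) : w.getD 0 G.vin = G.vin := by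
  cases w with
  | nil => rfl
  | cons x w => simpa using hw.1

theorem FinPath.edge_getD {w : List V} (hw : FinPath G w) {m : ℕ} (hm : m + 1 < w.length) :
    G.E (w.getD m G.vin) (w.getD (m + 1) G.vin) := by
  rw [List.getD_eq_getElem _ _ (by omega), List.getD_eq_getElem _ _ hm]
  exact List.isChain_iff_getElem.mp hw.2 m hm

theorem List.exists_eq_append_cons_append_cons_of_card_lt {α : Type*} [Fintype α] {P : α → Prop}
    [DecidablePred P] {u : List α} (h : (Finset.univ.filter P).card < u.countP (fun x => P x)) :
    ∃ v a b d, P v ∧ u = a ++ v :: b ++ v :: d := by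
  classical
  have hdup : ¬ (u.filter (fun x => P x)).Nodup := fun hnodup => by
    have hsub : (u.filter (fun x => P x)).toFinset ⊆ Finset.univ.filter P := by
      intro x; simp
    have := Finset.card_le_card hsub
    rw [List.toFinset_card_of_nodup hnodup, ← List.countP_eq_length_filter] at this
    omega
  obtain ⟨v, hv⟩ := List.exists_duplicate_iff_not_nodup.mpr hdup
  obtain ⟨r₁, r₂, rfl, hv₁, hv₂⟩ :=
    List.cons_sublist_iff.mp ((List.duplicate_iff_sublist.mp hv).trans List.filter_sublist)
  obtain ⟨a, b, rfl⟩ := List.append_of_mem hv₁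
  obtain ⟨b', d, rfl⟩ := List.append_of_mem (List.singleton_sublist.mp hv₂)
  exact ⟨v, a, b ++ b', d, by simpa using (List.mem_filter.mp hv.mem).2, by simp⟩

theorem exists_consistentPlay_lasso {j : Fin 2} {σ : List V → V → V} (hpos : Positional σ)
    {p b d : List V} {v : V} (hw : FinPath G (p ++ v :: b ++ v :: d))
    (hcons : FinConsistent G j σ (p ++ v :: b ++ v :: d)) :
    ∃ ρ, ConsistentPlay G j σ ρ ∧ (∃ᶠ m in atTop, ρ m = v) ∧ ∀ᶠ m in atTop, ρ m ∈ v :: b := by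
  set w := p ++ v :: b ++ v :: d
  set L := b.length + 1
  have hL : 0 < L := b.length.succ_pos
  set ρ : ℕ → V := fun m => w.getD (lassoIdx p.length L m) G.vin
  have hlen : p.length + L < w.length := by simp [w, L]
  have hlt : ∀ m, lassoIdx p.length L m + 1 < w.length := fun m => by
    have := lassoIdx_lt (q := p.length) hL m; omega
  have hloop : ∀ r < L, w.getD (p.length + r) G.vin = (v :: b).getD r G.vin := by
    intro r hr
    rw [List.getD_append _ _ _ _ (by simp; omega), List.getD_append_right _ _ _ _ (by omega),
      Nat.add_sub_cancel_left]
  have hstart : w.getD p.length G.vin = v := by simpa using hloop 0 hL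
  have hnext : ∀ m, ρ (m + 1) = w.getD (lassoIdx p.length L m + 1) G.vin := by
    intro m
    rcases lassoIdx_succ (q := p.length) hL m with h | ⟨h₁, h₂⟩
    · simp only [ρ, h]
    · simp only [ρ, h₁, h₂, hstart]
      simp [w, L]
  refine ⟨ρ, ⟨⟨?_, fun m => ?_⟩, fun m hown => ?_⟩, ?_, ?_⟩
  · simpa [ρ, lassoIdx_zero] using hw.getD_zero
  · rw [hnext]; exact hw.edge_getD G (hlt m)
  · rw [hnext, hcons _ (hlt m) hown]; exact hpos _ _ _
  · refine frequently_atTop.mpr fun N => ⟨p.length + L * N, by nlinarith, ?_⟩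
    simp only [ρ, lassoIdx_add_mul, hstart]
  · filter_upwards [eventually_ge_atTop p.length] with m hm
    obtain ⟨r, hr⟩ := Nat.exists_eq_add_of_le (le_lassoIdx (d := L) hm)
    have := lassoIdx_lt (q := p.length) hL m
    simp only [ρ, hr]
    rw [hloop r (by omega), List.getD_eq_getElem _ _ (by simp; omega)]
    exact List.getElem_mem _

theorem FTWins_of_positional [Fintype V] (col : V → ℕ) {n k : ℕ}
    (hthresh : ∀ c < n, (Finset.univ.filter fun v => col v = c).card < k) {j : Fin 2}
    {σ : List V → V → V} (hpos : Positional σ) (hwin : WinningStrategy G col j σ) :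
    FTWins G col n k j := by
  refine ⟨σ, hwin.1, fun w hw hcons => ?_⟩
  obtain ⟨c, hc, hck⟩ := hw.2.1
  refine ⟨c, hc, hck, ?_⟩
  obtain ⟨p, u, rfl, hge, hcount⟩ := exists_append_countP_eq_Sc col c w
  obtain ⟨v, a, b, d, hv, rfl⟩ := List.exists_eq_append_cons_append_cons_of_card_lt
    (P := fun x => col x = c) (u := u) (by rw [hcount, hw.Sc_eq G col hc hck]; exact hthresh c hc)
  have hassoc : p ++ (a ++ v :: b ++ v :: d) = p ++ a ++ v :: b ++ v :: d := by simp
  rw [hassoc] at hw hcons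
  obtain ⟨ρ, hρ, hfreq, hloop⟩ := exists_consistentPlay_lasso G hpos hw.1 hcons
  have hmin : minInfCol col ρ = c := minInfCol_eq_of_frequently col ρ
    (hfreq.mono fun m hm => hm ▸ hv)
    (hloop.mono fun m hm => hge _ (by simp only [List.mem_cons, List.mem_append] at hm ⊢; tauto))
  exact hmin ▸ hwin.2 ρ hρ

end Pumping

section Attractor

variable {V : Type*} (G : GameGraph V) (j : Fin 2) (U T : Set V)

def attrStep (A : Set V) : Set V :=
  A ∪ {v ∈ U | (G.own v = j ∧ ∃ w ∈ A, G.E v w) ∨ (G.own v ≠ j ∧ ∀ w ∈ U, G.E v w → w ∈ A)}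

def attrLevel (p : ℕ) : Set V := (attrStep G j U)^[p] T

def attr : Set V := ⋃ p, attrLevel G j U T p

noncomputable def attrRank (v : V) : ℕ := sInf {p | v ∈ attrLevel G j U T p}

open Classical in
noncomputable def attrMove (v : V) : V :=
  if h : ∃ w, G.E v w ∧ w ∈ attrLevel G j U T (attrRank G j U T v - 1) then h.choose else v

variable {G j U T}

theorem attrLevel_succ (p : ℕ) :
    attrLevel G j U T (p + 1) = attrStep G j U (attrLevel G j U T p) :=
  Function.iterate_succ_apply' _ _ _

theorem attrLevel_mono : Monotone (attrLevel G j U T) :=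
  monotone_nat_of_le_succ fun p => by rw [attrLevel_succ]; exact Set.subset_union_left

theorem mem_attr {v : V} : v ∈ attr G j U T ↔ ∃ p, v ∈ attrLevel G j U T p := Set.mem_iUnion

theorem subset_attr : T ⊆ attr G j U T := fun _ hv => mem_attr.mpr ⟨0, hv⟩

theorem attr_subset (hT : T ⊆ U) : attr G j U T ⊆ U := by
  suffices ∀ p, attrLevel G j U T p ⊆ U from fun v hv =>
    (mem_attr.mp hv).elim fun p hp => this p hp
  intro p
  induction p with
  | zero => exact hT
  | succ p ih =>
    rw [attrLevel_succ]
    exact Set.union_subset ih fun v hv => hv.1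

theorem mem_attr_of_edge {v w : V} (hv : v ∈ U) (ho : G.own v = j) (he : G.E v w)
    (hw : w ∈ attr G j U T) : v ∈ attr G j U T := by
  obtain ⟨p, hp⟩ := mem_attr.mp hw
  exact mem_attr.mpr ⟨p + 1, by rw [attrLevel_succ]; exact Or.inr ⟨hv, Or.inl ⟨ho, w, hp, he⟩⟩⟩

theorem exists_attr_eq_attrLevel [Finite V] : ∃ N, attr G j U T = attrLevel G j U T N := by
  obtain ⟨N, hN⟩ := WellFoundedGT.monotone_chain_condition ⟨attrLevel G j U T, attrLevel_mono⟩
  refine ⟨N, (Set.iUnion_subset fun p => ?_).antisymm (Set.subset_iUnion _ N)⟩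
  rcases le_total p N with hp | hp
  · exact attrLevel_mono hp
  · exact (hN p hp).ge

theorem mem_attr_of_forall [Finite V] {v : V} (hv : v ∈ U) (ho : G.own v ≠ j)
    (h : ∀ w ∈ U, G.E v w → w ∈ attr G j U T) : v ∈ attr G j U T := by
  obtain ⟨N, hN⟩ : ∃ N, attr G j U T = attrLevel G j U T N := exists_attr_eq_attrLevel
  rw [hN] at h
  exact mem_attr.mpr ⟨N + 1, by rw [attrLevel_succ]; exact Or.inr ⟨hv, Or.inr ⟨ho, h⟩⟩⟩

theorem diff_attr_total [Finite V] (hU : ∀ v ∈ U, ∃ w ∈ U, G.E v w) :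
    ∀ v ∈ U \ attr G j U T, ∃ w ∈ U \ attr G j U T, G.E v w := by
  rintro v ⟨hvU, hvA⟩
  by_cases ho : G.own v = j
  · obtain ⟨w, hwU, he⟩ := hU v hvU
    exact ⟨w, ⟨hwU, fun hwA => hvA (mem_attr_of_edge hvU ho he hwA)⟩, he⟩
  · by_contra! h
    exact hvA (mem_attr_of_forall hvU ho fun w hwU he => by_contra fun hwA => h w ⟨hwU, hwA⟩ he)

theorem exists_attrRank_eq_add_one {v : V} (hv : v ∈ attr G j U T) (hvT : v ∉ T) :
    ∃ r, attrRank G j U T v = r + 1 ∧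
      ((G.own v = j ∧ ∃ w ∈ attrLevel G j U T r, G.E v w) ∨
        (G.own v ≠ j ∧ ∀ w ∈ U, G.E v w → w ∈ attrLevel G j U T r)) := by
  have hmem : v ∈ attrLevel G j U T (attrRank G j U T v) := Nat.sInf_mem (mem_attr.mp hv)
  obtain ⟨r, hr⟩ : ∃ r, attrRank G j U T v = r + 1 :=
    Nat.exists_eq_add_one_of_ne_zero fun h0 => hvT (by rwa [h0] at hmem)
  rw [hr, attrLevel_succ] at hmem
  rcases hmem with hlow | ⟨-, hcase⟩
  · exact absurd hlow (Nat.notMem_of_lt_sInf (show r < attrRank G j U T v by omega))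
  · exact ⟨r, hr, hcase⟩

theorem attrMove_spec {v : V} (hv : v ∈ attr G j U T) (hvT : v ∉ T) (ho : G.own v = j) :
    G.E v (attrMove G j U T v) ∧
      attrMove G j U T v ∈ attrLevel G j U T (attrRank G j U T v - 1) := by
  obtain ⟨r, hr, hcase⟩ := exists_attrRank_eq_add_one hv hvT
  rcases hcase with ⟨-, w, hw, he⟩ | ⟨ho', -⟩
  · have hex : ∃ w, G.E v w ∧ w ∈ attrLevel G j U T (attrRank G j U T v - 1) :=
      ⟨w, he, by rwa [hr, Nat.add_sub_cancel]⟩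
    rw [attrMove, dif_pos hex]
    exact hex.choose_spec
  · exact absurd ho ho'

theorem edge_attrMove {v : V} (hv : v ∈ attr G j U T) (hvT : v ∉ T) (ho : G.own v = j) :
    G.E v (attrMove G j U T v) ∧ attrMove G j U T v ∈ attr G j U T :=
  (attrMove_spec hv hvT ho).imp_right fun h => mem_attr.mpr ⟨_, h⟩

theorem attrRank_lt_of_edge {v w : V} (hv : v ∈ attr G j U T) (hvT : v ∉ T) (hw : w ∈ U)
    (he : G.E v w) (hmove : G.own v = j → w = attrMove G j U T v) :
    w ∈ attr G j U T ∧ attrRank G j U T w < attrRank G j U T v := by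
  obtain ⟨r, hr, hcase⟩ := exists_attrRank_eq_add_one hv hvT
  suffices hwr : w ∈ attrLevel G j U T r from
    ⟨mem_attr.mpr ⟨r, hwr⟩, hr ▸ Nat.lt_succ_of_le (Nat.sInf_le hwr)⟩
  rcases hcase with ⟨ho, -⟩ | ⟨-, hall⟩
  · simpa [hmove ho, hr] using (attrMove_spec hv hvT ho).2
  · exact hall w hw he

theorem exists_mem_of_mem_attr {ρ : ℕ → V} {m₀ : ℕ}
    (hρ : ∀ m ≥ m₀, ρ (m + 1) ∈ U ∧ G.E (ρ m) (ρ (m + 1)) ∧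
      (ρ m ∈ attr G j U T → ρ m ∉ T → G.own (ρ m) = j → ρ (m + 1) = attrMove G j U T (ρ m)))
    (h₀ : ρ m₀ ∈ attr G j U T) : ∃ m ≥ m₀, ρ m ∈ T := by
  induction h : attrRank G j U T (ρ m₀) using Nat.strong_induction_on generalizing m₀ with
  | _ r ih =>
    by_cases hT : ρ m₀ ∈ T
    · exact ⟨m₀, le_rfl, hT⟩
    obtain ⟨hU, he, hmove⟩ := hρ m₀ le_rfl
    obtain ⟨hA, hlt⟩ := attrRank_lt_of_edge h₀ hT hU he (hmove h₀ hT)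
    obtain ⟨m, hm, hmT⟩ := ih _ (h ▸ hlt) (fun m hm => hρ m (by omega)) hA rfl
    exact ⟨m, by omega, hmT⟩

theorem frequently_mem_of_frequently_mem_attr {ρ : ℕ → V}
    (hρ : ∀ᶠ m in atTop, ρ (m + 1) ∈ U ∧ G.E (ρ m) (ρ (m + 1)) ∧
      (ρ m ∈ attr G j U T → ρ m ∉ T → G.own (ρ m) = j → ρ (m + 1) = attrMove G j U T (ρ m)))
    (h : ∃ᶠ m in atTop, ρ m ∈ attr G j U T) : ∃ᶠ m in atTop, ρ m ∈ T := by
  obtain ⟨N, hN⟩ := eventually_atTop.mp hρ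
  refine frequently_atTop.mpr fun M => ?_
  obtain ⟨m₀, hm₀, hA⟩ := frequently_atTop.mp h (max M N)
  obtain ⟨m, hm, hT⟩ := exists_mem_of_mem_attr (fun m hm => hN m (by omega)) hA
  exact ⟨m, by omega, hT⟩

end Attractor

section WinRegions

variable {V : Type*} (G : GameGraph V) (col : V → ℕ)

/-- `wins` is asked of plays that only *eventually* stay in `W` and follow `s`; this is what lets
regions be glued together. -/
structure IsWinRegion (U : Set V) (i : Fin 2) (s : V → V) (W : Set V) : Prop where
  subset : W ⊆ U
  move : ∀ v ∈ W, G.own v = i → G.E v (s v) ∧ s v ∈ W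
  trap : ∀ v ∈ W, G.own v ≠ i → ∀ w ∈ U, G.E v w → w ∈ W
  wins : ∀ ρ : ℕ → V, (∀ m, G.E (ρ m) (ρ (m + 1))) → (∀ᶠ m in atTop, ρ m ∈ W) →
    (∀ᶠ m in atTop, G.own (ρ m) = i → ρ (m + 1) = s (ρ m)) → minInfCol col ρ % 2 = i

variable {G col} {U : Set V} {i : Fin 2} {s : V → V} {W : Set V}

theorem isWinRegion_empty (U : Set V) (i : Fin 2) (s : V → V) : IsWinRegion G col U i s ∅ :=
  ⟨Set.empty_subset U, fun _ h => h.elim, fun _ h => h.elim,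
    fun _ _ h _ => h.exists.elim fun _ h => h.elim⟩

theorem IsWinRegion.eventually_mem (hW : IsWinRegion G col U i s W) {ρ : ℕ → V}
    (hedge : ∀ m, G.E (ρ m) (ρ (m + 1)))
    (hρ : ∀ᶠ m in atTop, ρ m ∈ U ∧ (ρ m ∈ W → G.own (ρ m) = i → ρ (m + 1) = s (ρ m)))
    (hfreq : ∃ᶠ m in atTop, ρ m ∈ W) : ∀ᶠ m in atTop, ρ m ∈ W := by
  obtain ⟨N, hN⟩ := eventually_atTop.mp hρ
  obtain ⟨m₀, hm₀, hW₀⟩ := frequently_atTop.mp hfreq N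
  refine eventually_atTop.mpr ⟨m₀, fun m hm => ?_⟩
  induction m, hm using Nat.le_induction with
  | base => exact hW₀
  | succ m hm ih =>
    by_cases ho : G.own (ρ m) = i
    · rw [(hN m (by omega)).2 ih ho]
      exact (hW.move _ ih ho).2
    · exact hW.trap _ ih ho _ (hN (m + 1) (by omega)).1 (hedge m)

theorem IsWinRegion.wins_of_frequently (hW : IsWinRegion G col U i s W) {ρ : ℕ → V}
    (hedge : ∀ m, G.E (ρ m) (ρ (m + 1)))
    (hρ : ∀ᶠ m in atTop, ρ m ∈ U ∧ (ρ m ∈ W → G.own (ρ m) = i → ρ (m + 1) = s (ρ m)))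
    (hfreq : ∃ᶠ m in atTop, ρ m ∈ W) : minInfCol col ρ % 2 = i := by
  have hmem := hW.eventually_mem hedge hρ hfreq
  refine hW.wins ρ hedge hmem ?_
  filter_upwards [hρ, hmem] with m h hm using h.2 hm

/-- Player `j` could only leave `W` into its own attractor. -/
theorem IsWinRegion.of_diff_attr {j : Fin 2} {T : Set V} (hij : i ≠ j)
    (hW : IsWinRegion G col (U \ attr G j U T) i s W) : IsWinRegion G col U i s W where
  subset := hW.subset.trans Set.sdiff_subset
  move := hW.move
  trap v hv ho w hw he := by
    have hvU := (hW.subset hv).1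
    refine hW.trap v hv ho w ⟨hw, fun hwA => (hW.subset hv).2 ?_⟩ he
    exact mem_attr_of_edge hvU (Fin.eq_of_ne_of_ne ho hij) he hwA
  wins := hW.wins

theorem IsWinRegion.attr [DecidablePred (· ∈ W)] (hW : IsWinRegion G col U i s W) :
    IsWinRegion G col U i (W.piecewise s (attrMove G i U W)) (attr G i U W) where
  subset := attr_subset hW.subset
  move v hv ho := by
    by_cases hvW : v ∈ W
    · rw [Set.piecewise_eq_of_mem _ _ _ hvW]
      exact (hW.move v hvW ho).imp_right fun h => subset_attr h
    · rw [Set.piecewise_eq_of_notMem _ _ _ hvW]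
      exact edge_attrMove hv hvW ho
  trap v hv ho w hw he := by
    by_cases hvW : v ∈ W
    · exact subset_attr (hW.trap v hvW ho w hw he)
    · exact (attrRank_lt_of_edge hv hvW hw he fun h => absurd h ho).1
  wins ρ hedge hA hcons := by
    have hAU : ∀ᶠ m in atTop, ρ m ∈ U := hA.mono fun m h => attr_subset hW.subset h
    have hfreq : ∃ᶠ m in atTop, ρ m ∈ W := by
      refine frequently_mem_of_frequently_mem_attr ?_ hA.frequently
      filter_upwards [(tendsto_add_atTop_nat 1).eventually hAU, hcons] with m hU hmove
      exact ⟨hU, hedge m, fun _ hmW ho => by rw [hmove ho, Set.piecewise_eq_of_notMem _ _ _ hmW]⟩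
    refine hW.wins_of_frequently hedge ?_ hfreq
    filter_upwards [hAU, hcons] with m hU hmove
    exact ⟨hU, fun hmW ho => by rw [hmove ho, Set.piecewise_eq_of_mem _ _ _ hmW]⟩

theorem IsWinRegion.union {B : Set V} [DecidablePred (· ∈ B)] {sB : V → V}
    (hB : IsWinRegion G col U i sB B) (hW : IsWinRegion G col (U \ B) i s W) :
    IsWinRegion G col U i (B.piecewise sB s) (B ∪ W) where
  subset := Set.union_subset hB.subset (hW.subset.trans Set.sdiff_subset)
  move v hv ho := by
    by_cases hvB : v ∈ B
    · rw [Set.piecewise_eq_of_mem _ _ _ hvB]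
      exact (hB.move v hvB ho).imp_right Or.inl
    · rw [Set.piecewise_eq_of_notMem _ _ _ hvB]
      exact (hW.move v (hv.resolve_left hvB) ho).imp_right Or.inr
  trap v hv ho w hw he := by
    rcases hv with hvB | hvW
    · exact Or.inl (hB.trap v hvB ho w hw he)
    · by_cases hwB : w ∈ B
      · exact Or.inl hwB
      · exact Or.inr (hW.trap v hvW ho w ⟨hw, hwB⟩ he)
  wins ρ hedge hBW hcons := by
    by_cases hfreq : ∃ᶠ m in atTop, ρ m ∈ B
    · refine hB.wins_of_frequently hedge ?_ hfreq
      filter_upwards [hBW, hcons] with m hm hmove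
      refine ⟨Set.union_subset hB.subset (hW.subset.trans Set.sdiff_subset) hm, fun hmB ho => ?_⟩
      rw [hmove ho, Set.piecewise_eq_of_mem _ _ _ hmB]
    · have hW' : ∀ᶠ m in atTop, ρ m ∈ W := by
        filter_upwards [hBW, not_frequently.mp hfreq] with m hm hmB using hm.resolve_left hmB
      refine hW.wins ρ hedge hW' ?_
      filter_upwards [hW', hcons] with m hm hmove ho
      rw [hmove ho, Set.piecewise_eq_of_notMem _ _ _ (hW.subset hm).2]

/-- A play either visits the attractor of the minimal color `c` infinitely often, and then sees
`c` infinitely often, or eventually stays in its complement. -/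
theorem isWinRegion_self_of_minColor (hU : ∀ v ∈ U, ∃ w ∈ U, G.E v w) {c : ℕ}
    (hc : ∀ v ∈ U, c ≤ col v) (hi : c % 2 = i) {s : V → V}
    (hs : IsWinRegion G col (U \ attr G i U {v ∈ U | col v = c}) i s
      (U \ attr G i U {v ∈ U | col v = c})) :
    ∃ s, IsWinRegion G col U i s U := by
  classical
  set C := {v ∈ U | col v = c}
  set A := attr G i U C
  choose! s₀ hs₀ using hU
  refine ⟨A.piecewise (C.piecewise s₀ (attrMove G i U C)) s,
    ⟨subset_rfl, fun v hv ho => ?_, fun _ _ _ w hw _ => hw, fun ρ hedge hρU hcons => ?_⟩⟩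
  · by_cases hvA : v ∈ A
    · rw [Set.piecewise_eq_of_mem _ _ _ hvA]
      by_cases hvC : v ∈ C
      · rw [Set.piecewise_eq_of_mem _ _ _ hvC]
        exact (hs₀ v hv).symm
      · rw [Set.piecewise_eq_of_notMem _ _ _ hvC]
        exact (edge_attrMove hvA hvC ho).imp_right fun h => attr_subset (fun _ h => h.1) h
    · rw [Set.piecewise_eq_of_notMem _ _ _ hvA]
      exact (hs.move v ⟨hv, hvA⟩ ho).imp_right fun h => h.1
  · by_cases hA : ∃ᶠ m in atTop, ρ m ∈ A
    · have hC : ∃ᶠ m in atTop, ρ m ∈ C := by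
        refine frequently_mem_of_frequently_mem_attr ?_ hA
        filter_upwards [(tendsto_add_atTop_nat 1).eventually hρU, hcons] with m hU hmove
        refine ⟨hU, hedge m, fun hmA hmC ho => ?_⟩
        rw [hmove ho, Set.piecewise_eq_of_mem _ _ _ hmA, Set.piecewise_eq_of_notMem _ _ _ hmC]
      rw [minInfCol_eq_of_frequently col ρ (hC.mono fun m h => h.2)
        (hρU.mono fun m h => hc _ h), hi]
    · have hdiff : ∀ᶠ m in atTop, ρ m ∈ U \ A := by
        filter_upwards [hρU, not_frequently.mp hA] with m hU hmA using ⟨hU, hmA⟩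
      refine hs.wins ρ hedge hdiff ?_
      filter_upwards [hdiff, hcons] with m hm hmove ho
      rw [hmove ho, Set.piecewise_eq_of_notMem _ _ _ hm.2]

end WinRegions

section Determinacy

variable {V : Type*} (G : GameGraph V) (col : V → ℕ)

def IsWinPartition (U : Set V) (i : Fin 2) : Prop :=
  ∃ W s s', IsWinRegion G col U i s W ∧ IsWinRegion G col U i.rev s' (U \ W)

variable {G col}

theorem IsWinPartition.rev {U : Set V} {i : Fin 2} (h : IsWinPartition G col U i) :
    IsWinPartition G col U i.rev := by
  obtain ⟨W, s, s', hW, hW'⟩ := h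
  exact ⟨U \ W, s', s, hW', by rwa [Fin.rev_rev, Set.sdiff_sdiff_cancel_left hW.subset]⟩

theorem IsWinPartition.of_player {U : Set V} {i : Fin 2} (h : IsWinPartition G col U i)
    (j : Fin 2) : IsWinPartition G col U j :=
  (Fin.eq_or_eq_rev i j).elim (· ▸ h) (· ▸ h.rev)

/-- Zielonka's theorem. -/
theorem isWinPartition [Finite V] (U : Set V) (hU : ∀ v ∈ U, ∃ w ∈ U, G.E v w) (i : Fin 2) :
    IsWinPartition G col U i := by
  classical
  induction U using WellFoundedLT.induction generalizing i with
  | _ U ih =>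
  rcases U.eq_empty_or_nonempty with rfl | hne
  · exact ⟨∅, id, id, isWinRegion_empty _ _ _, by simpa using isWinRegion_empty _ _ _⟩
  obtain ⟨v₀, hv₀, hmin⟩ := Set.exists_min_image U col U.toFinite hne
  set i₀ : Fin 2 := ⟨col v₀ % 2, Nat.mod_lt _ two_pos⟩
  set A := attr G i₀ U {v ∈ U | col v = col v₀}
  have hv₀A : v₀ ∈ A := subset_attr ⟨hv₀, rfl⟩
  obtain ⟨X, sX, s', hX, hX'⟩ := ih (U \ A) (Set.sdiff_ssubset_left_iff.mpr ⟨v₀, hv₀, hv₀A⟩)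
    (diff_attr_total hU) i₀.rev
  rcases X.eq_empty_or_nonempty with rfl | ⟨x, hx⟩
  · obtain ⟨s, hs⟩ := isWinRegion_self_of_minColor hU hmin rfl (by simpa using hX')
    exact IsWinPartition.of_player (i := i₀)
      ⟨U, s, id, hs, by simpa using isWinRegion_empty _ _ _⟩ i
  · have hB := (hX.of_diff_attr (Fin.rev_ne i₀)).attr
    set B := attr G i₀.rev U X
    have hxB : x ∈ B := subset_attr hx
    obtain ⟨Y, sY, s'', hY, hY'⟩ := ih (U \ B)
      (Set.sdiff_ssubset_left_iff.mpr ⟨x, (hX.subset hx).1, hxB⟩) (diff_attr_total hU) i₀.rev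
    refine IsWinPartition.of_player (i := i₀.rev) ⟨B ∪ Y, _, s'', hB.union hY, ?_⟩ i
    rw [← Set.sdiff_sdiff]
    exact hY'.of_diff_attr (Fin.rev_ne i₀.rev)

theorem IsWinRegion.exists_winningStrategy {i : Fin 2} {s : V → V} {W : Set V}
    (hW : IsWinRegion G col Set.univ i s W) (hv : G.vin ∈ W) :
    ∃ σ, Positional σ ∧ WinningStrategy G col i σ := by
  classical
  let σ : V → V := fun v => if G.own v = i ∧ v ∈ W then s v else (G.succ v).choose
  have hσ : ∀ {v}, G.own v = i → v ∈ W → σ v = s v := fun ho hv => if_pos ⟨ho, hv⟩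
  refine ⟨fun _ => σ, fun _ _ _ => rfl, fun _ v => ?_, fun ρ hρ => ?_⟩
  · by_cases hvW : G.own v = i ∧ v ∈ W
    · simp only [σ, if_pos hvW]; exact (hW.move v hvW.2 hvW.1).1
    · simp only [σ, if_neg hvW]; exact (G.succ v).choose_spec
  have hmem : ∀ m, ρ m ∈ W := by
    intro m
    induction m with
    | zero => exact hρ.1.1 ▸ hv
    | succ m ih =>
      by_cases ho : G.own (ρ m) = i
      · exact ((hρ.2 m ho).trans (hσ ho ih)).symm ▸ (hW.move _ ih ho).2
      · exact hW.trap _ ih ho _ (Set.mem_univ _) (hρ.1.2 m)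
  exact hW.wins ρ hρ.1.2 (Eventually.of_forall hmem)
    (Eventually.of_forall fun m ho => (hρ.2 m ho).trans (hσ ho (hmem m)))

variable (G col) in
theorem exists_positional_winningStrategy [Finite V] :
    ∃ j σ, Positional σ ∧ WinningStrategy G col j σ := by
  obtain ⟨W, s, s', hW, hW'⟩ := isWinPartition (G := G) (col := col) Set.univ
    (fun v _ => (G.succ v).imp fun _ hw => ⟨trivial, hw⟩) 0
  by_cases hv : G.vin ∈ W
  · exact ⟨0, hW.exists_winningStrategy hv⟩
  · exact ⟨_, hW'.exists_winningStrategy ⟨trivial, hv⟩⟩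

end Determinacy

/-- Theorem 3: on a finite game graph, for every threshold `k` exceeding
`max_{c ∈ [n]} |V|_c`, Player `i` wins the parity game `(G, col)` iff Player `i`
wins the finite-time parity game `(G, col, k)`. -/
theorem stmt4 {V : Type*} [Fintype V] (n : ℕ) (G : GameGraph V) (col : V → ℕ)
    (hcol : ∀ v, col v < n) (k : ℕ) (hk : 1 ≤ k)
    (hthresh : ∀ c < n, (Finset.univ.filter fun v => col v = c).card < k)
    (i : Fin 2) :
    WinsGame G col i ↔ FTWins G col n k i := by
  obtain ⟨j, σ, hpos, hσ⟩ := exists_positional_winningStrategy G col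
  have hFT : FTWins G col n k j := FTWins_of_positional G col hthresh hpos hσ
  rcases Fin.eq_or_eq_rev i j with rfl | rfl
  · exact ⟨fun _ => hFT, fun _ => ⟨σ, hσ⟩⟩
  · exact ⟨fun h => (not_winsGame_and_winsGame_rev G col i ⟨h, σ, hσ⟩).elim,
      fun h => (not_FTWins_and_FTWins_rev G col hcol hk i ⟨h, hFT⟩).elim⟩

end FDGames
end

section
/- Let w be a finite path in a pushdown game graph with 0 ∈ StairPositions(w), and let m ∈ ℕ. If |w| ≥ 2^m, then w has a prefix w' with |StairPositions(w')| > m. -/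
namespace FDGames


/-- A pushdown system.  The bottom-of-stack symbol `⊥` is kept implicit: a stack
content is the list of symbols from `Γ` strictly above `⊥` (top = head), and the
top-of-stack symbol read by a transition is an `Option Γ` (`none` = `⊥`).  Since
`⊥` can neither be written nor deleted, a transition reading a symbol of `Γ`
rewrites it to at most two symbols of `Γ`, and a transition reading `⊥` writes at
most one symbol of `Γ` above `⊥`.  The system is deadlock-free. -/
structure PDS (Q Γ : Type*) where
  qin : Q
  Δ : Set (Q × Option Γ × Q × List Γ)
  bound2 : ∀ q A p α, (q, A, p, α) ∈ Δ → α.length ≤ 2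
  bound1 : ∀ q p α, (q, (none : Option Γ), p, α) ∈ Δ → α.length ≤ 1
  df : ∀ q A, ∃ q' α, (q, A, q', α) ∈ Δ

/-- Configurations: a state together with the stack content above `⊥`. -/
abbrev Config (Q Γ : Type*) := Q × List Γ

/-- The stack height of a configuration. -/
def confSh {Q Γ : Type*} (v : Config Q Γ) : ℕ := v.2.length

/-- One step of the pushdown system between configurations. -/
def PDS.step {Q Γ : Type*} (P : PDS Q Γ) (u v : Config Q Γ) : Prop :=
  (u.2 = [] ∧ (u.1, (none : Option Γ), v.1, v.2) ∈ P.Δ) ∨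
  (∃ a rest α, u.2 = a :: rest ∧ (u.1, some a, v.1, α) ∈ P.Δ ∧ v.2 = α ++ rest)

/-- The pushdown game graph induced by a PDS and a partition of its states. -/
def PDS.graph {Q Γ : Type*} (P : PDS Q Γ) (own : Q → Fin 2) :
    GameGraph (Config Q Γ) where
  own := fun v => own v.1
  E := P.step
  vin := (P.qin, [])
  succ := by
    rintro ⟨q, _ | ⟨a, rest⟩⟩
    · obtain ⟨q', α, h⟩ := P.df q none
      exact ⟨(q', α), Or.inl ⟨rfl, h⟩⟩
    · obtain ⟨q', α, h⟩ := P.df q (some a)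
      exact ⟨(q', α ++ rest), Or.inr ⟨a, rest, α, rfl, h, rfl⟩⟩

/-- The stair positions of a sequence of stack heights. -/
def stairPositions (hs : List ℕ) : Finset ℕ :=
  (Finset.range hs.length).filter fun m =>
    ∀ m' < hs.length, m ≤ m' → hs.getD m 0 ≤ hs.getD m' 0

/-- For a word of (color, stack height) pairs, the position where `lastBump`
starts, i.e. `l + 1` for the second largest stair position `l` (and `0` if there
is no such position). -/
def bumpStart (w : List (ℕ × ℕ)) : ℕ :=
  ((Finset.range (w.length - 1)).filter
    fun l => (w.getD l (0, 0)).2 ≤ ((w.getLast?).getD (0, 0)).2).sup (· + 1)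

theorem bumpStart_lt {w : List (ℕ × ℕ)} (h : w ≠ []) : bumpStart w < w.length := by
  have h1 : 0 < w.length := List.length_pos_iff.mpr h
  have h2 : bumpStart w ≤ w.length - 1 := by
    apply Finset.sup_le
    intro l hl
    have := Finset.mem_range.mp (Finset.mem_filter.mp hl).1
    omega
  omega

/-- The minimal color occurring in a word of (color, stack height) pairs. -/
def minColList (w : List (ℕ × ℕ)) : ℕ := WithTop.untopD 0 ((w.map Prod.fst).minimum)

/-- The stair-scoring function `StairSc_c`, on words of (color, stack height)
pairs.  `w.take (bumpStart w)` is `Reset(w)` and `w.drop (bumpStart w)` is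
`lastBump(w)`. -/
def StairSc (c : ℕ) (w : List (ℕ × ℕ)) : ℕ :=
  if h : w = [] then 0
  else if c < minColList (w.drop (bumpStart w)) then StairSc c (w.take (bumpStart w))
  else if minColList (w.drop (bumpStart w)) = c then StairSc c (w.take (bumpStart w)) + 1
  else 0
termination_by w.length
decreasing_by
  all_goals
    have hlt := bumpStart_lt h
    simp only [List.length_take]
    omega

/-- Maximum of `StairSc_c` over all prefixes. -/
def MaxStairSc (c : ℕ) (w : List (ℕ × ℕ)) : ℕ :=
  (Finset.range (w.length + 1)).sup fun m => StairSc c (w.take m)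

/-- The word of (color, stack height) pairs associated to a path of
configurations. -/
def toCH {Q Γ : Type*} (col : Q → ℕ) (w : List (Config Q Γ)) : List (ℕ × ℕ) :=
  w.map fun v => (col v.1, v.2.length)

/-! Let `h₀` be the initial stack height, which is minimal along the path.
If the height returns to `h₀` at some position `t ∈ [1, 2^m]`, then `t` is a stair position
and the suffix from `t` still has length at least `2^m`. Otherwise the heights at positions
`1, …, 2^m` all exceed `h₀`, and since the stack grows by at most one symbol per step, the
height at position `1` is `h₀ + 1`, so `1` is a stair position of the prefix of length
`2^m + 1`. In both cases a segment of length `2^m` starts at a stair position `a ≥ 1`; by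
induction one of its prefixes has more than `m` stair positions, and these, shifted by `a`,
together with `0`, are stair positions of a prefix of the whole path. -/

section StairPositions

variable {l : List ℕ} {p a : ℕ}

theorem mem_stairPositions :
    p ∈ stairPositions l ↔
      ∃ hp : p < l.length, ∀ q (hq : q < l.length), p ≤ q → l[p] ≤ l[q] := by
  simp only [stairPositions, Finset.mem_filter, Finset.mem_range, List.getD_eq_getElem?_getD]
  constructor <;> rintro ⟨hp, h⟩ <;>
    exact ⟨hp, fun q hq hpq => by simpa [hp, hq] using h q hq hpq⟩

theorem mem_stairPositions_take {j : ℕ} (hp : p ∈ stairPositions l) (hpj : p < j) :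
    p ∈ stairPositions (l.take j) := by
  obtain ⟨hpl, h⟩ := mem_stairPositions.mp hp
  refine mem_stairPositions.mpr ⟨by simp [hpl, hpj], fun q hq hpq => ?_⟩
  simp only [List.getElem_take]
  exact h q (by rw [List.length_take] at hq; omega) hpq

theorem zero_mem_stairPositions_drop (hp : p ∈ stairPositions l) :
    0 ∈ stairPositions (l.drop p) := by
  obtain ⟨hpl, h⟩ := mem_stairPositions.mp hp
  refine mem_stairPositions.mpr ⟨by simp [hpl], fun q hq _ => ?_⟩
  simp only [List.getElem_drop, Nat.add_zero]
  exact h (p + q) (by rw [List.length_drop] at hq; omega) (Nat.le_add_right p q)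

theorem add_mem_stairPositions_of_mem_drop (hp : p ∈ stairPositions (l.drop a)) :
    a + p ∈ stairPositions l := by
  obtain ⟨hpl, h⟩ := mem_stairPositions.mp hp
  simp only [List.length_drop, List.getElem_drop] at hpl h
  refine mem_stairPositions.mpr ⟨by omega, fun q hq hpq => ?_⟩
  obtain ⟨r, rfl⟩ := Nat.exists_eq_add_of_le (le_trans (Nat.le_add_right a p) hpq)
  exact h r (by omega) (by omega)

theorem card_stairPositions_drop_lt (h0 : 0 ∈ stairPositions l) (ha : 0 < a) :
    (stairPositions (l.drop a)).card < (stairPositions l).card := by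
  have hshift : insert 0 ((stairPositions (l.drop a)).image (a + ·)) ⊆ stairPositions l := by
    refine Finset.insert_subset h0 fun x hx => ?_
    obtain ⟨p, hp, rfl⟩ := Finset.mem_image.mp hx
    exact add_mem_stairPositions_of_mem_drop hp
  have h0_notMem : 0 ∉ (stairPositions (l.drop a)).image (a + ·) := by
    simp only [Finset.mem_image, not_exists, not_and]
    omega
  calc (stairPositions (l.drop a)).card
      = ((stairPositions (l.drop a)).image (a + ·)).card :=
        (Finset.card_image_of_injective _ (add_right_injective a)).symm
    _ < (insert 0 ((stairPositions (l.drop a)).image (a + ·))).card :=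
        Finset.card_lt_card (Finset.ssubset_insert h0_notMem)
    _ ≤ (stairPositions l).card := Finset.card_le_card hshift

theorem exists_pos_mem_stairPositions_take (hstep : l.IsChain fun x y => y ≤ x + 1)
    (h0 : 0 ∈ stairPositions l) {k : ℕ} (hk : 0 < k) (hlen : 2 * k ≤ l.length) :
    ∃ a n, 0 < a ∧ a + k ≤ n ∧ n ≤ l.length ∧ a ∈ stairPositions (l.take n) := by
  obtain ⟨hl, hmin⟩ := mem_stairPositions.mp h0
  by_cases hreturn : ∃ t, ∃ ht : t < l.length, 0 < t ∧ t ≤ k ∧ l[t] = l[0]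
  · obtain ⟨t, ht, ht0, htk, hlt⟩ := hreturn
    refine ⟨t, l.length, ht0, by omega, le_rfl, ?_⟩
    rw [List.take_length]
    exact mem_stairPositions.mpr ⟨ht, fun q hq _ => hlt ▸ hmin q hq (Nat.zero_le q)⟩
  · push Not at hreturn
    have hrise : l[1] ≤ l[0] + 1 := List.isChain_iff_getElem.mp hstep 0 (by omega)
    refine ⟨1, k + 1, one_pos, by omega, by omega,
      mem_stairPositions.mpr ⟨by rw [List.length_take]; omega, fun q hq h1q => ?_⟩⟩
    simp only [List.length_take] at hq
    simp only [List.getElem_take]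
    have := hreturn q (by omega) (by omega) (by omega)
    have := hmin q (by omega) (Nat.zero_le q)
    omega

theorem exists_take_card_stairPositions_gt (m : ℕ) (hstep : l.IsChain fun x y => y ≤ x + 1)
    (h0 : 0 ∈ stairPositions l) (hlen : 2 ^ m ≤ l.length) :
    ∃ j ≤ l.length, m < (stairPositions (l.take j)).card := by
  induction m generalizing l with
  | zero => exact ⟨l.length, le_rfl, by simpa using Finset.card_pos.mpr ⟨0, h0⟩⟩
  | succ m ih =>
    have hpow := Nat.two_pow_pos m
    obtain ⟨a, n, ha, han, hn, hstair⟩ := exists_pos_mem_stairPositions_take hstep h0 hpow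
      (by rwa [← pow_succ'])
    obtain ⟨j, hj, hcard⟩ := ih ((hstep.take n).drop a) (zero_mem_stairPositions_drop hstair)
      (by rw [List.length_drop, List.length_take]; omega)
    rw [List.length_drop, List.length_take] at hj
    have hsegment : ((l.take n).drop a).take j = (l.take (a + j)).drop a := by
      rw [List.drop_take, List.drop_take, List.take_take]
      congr 1
      omega
    refine ⟨a + j, by omega, ?_⟩
    rw [hsegment] at hcard
    have h0' := mem_stairPositions_take h0 (by omega : 0 < a + j)
    have := card_stairPositions_drop_lt h0' ha
    omega

end StairPositions

theorem PDS.confSh_le_of_step {Q Γ : Type*} {P : PDS Q Γ} {u v : Config Q Γ}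
    (h : P.step u v) : confSh v ≤ confSh u + 1 := by
  rcases h with ⟨_, hΔ⟩ | ⟨a, rest, α, hu, hΔ, hv⟩
  · have := P.bound1 _ _ _ hΔ
    simp only [confSh]
    omega
  · have := P.bound2 _ _ _ _ hΔ
    simp only [confSh, hu, hv, List.length_append, List.length_cons]
    omega

theorem stmt7_general {Q Γ : Type*} (P : PDS Q Γ)
    (w : List (Config Q Γ)) (hchain : w.Chain' P.step)
    (h0 : 0 ∈ stairPositions (w.map confSh)) (m : ℕ) (hlen : 2 ^ m ≤ w.length) :
    ∃ j ≤ w.length, m < (stairPositions ((w.take j).map confSh)).card := by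
  have hstep : (w.map confSh).IsChain fun x y => y ≤ x + 1 :=
    List.isChain_map confSh |>.mpr (hchain.imp fun _ _ => PDS.confSh_le_of_step)
  obtain ⟨j, hj, hcard⟩ :=
    exists_take_card_stairPositions_gt m hstep h0 (by rwa [List.length_map])
  exact ⟨j, by simpa using hj, by rwa [List.map_take]⟩

/-- Every finite path `w` in a pushdown game graph with `0 ∈ StairPositions(w)`
and `|w| ≥ 2 ^ m` has a prefix with more than `m` stair positions. -/
theorem stmt7 {Q Γ : Type*} [Finite Q] [Finite Γ] (P : PDS Q Γ)
    (w : List (Config Q Γ)) (hchain : w.Chain' P.step)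
    (h0 : 0 ∈ stairPositions (w.map confSh)) (m : ℕ) (hlen : 2 ^ m ≤ w.length) :
    ∃ j ≤ w.length, m < (stairPositions ((w.take j).map confSh)).card :=
  stmt7_general P w hchain h0 m hlen

end FDGames
end

section
/- Let (G, col) be a pushdown parity game with coloring col : Q → [n], and let w be a finite path in G with 0 ∈ StairPositions(w). Then there exists a word u over [n] with |u| = |Stairs(w)| such that StairSc_c(w) = Sc_c(u) for every c ∈ [n], where Sc is computed over the alphabet [n] with the identity coloring. -/
/-!
`StairSc_c(w)` is computed by peeling off `lastBump(w)` and recursing on `Reset(w)`, which ends at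
the previous stair; `Sc_c(u x)` is computed from `Sc_c(u)` and the single letter `x` by the same
case distinction. So the word `u` of minimal colours of the successive last bumps has the same
scores as `w`. Each peeling step removes exactly one stair position, the last one: the positions
of the last bump other than its end lie strictly above the final stack height, while every stair
of `Reset(w)` lies at most at that height. Hence `|u| = |Stairs(w)|`.
-/

namespace FDGames


theorem mem_stairPositions_s8 {hs : List ℕ} {m : ℕ} :
    m ∈ stairPositions hs ↔ m < hs.length ∧
      ∀ m' < hs.length, m ≤ m' → hs.getD m 0 ≤ hs.getD m' 0 := by
  simp [stairPositions]

theorem lt_length_of_mem_stairPositions {hs : List ℕ} {m : ℕ} (h : m ∈ stairPositions hs) :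
    m < hs.length :=
  (mem_stairPositions_s8.mp h).1

theorem stairPositions_eq_insert_take {hs : List ℕ} {b : ℕ} (hb : b < hs.length)
    (habove : ∀ m, b ≤ m → m < hs.length - 1 → hs.getD (hs.length - 1) 0 < hs.getD m 0)
    (hbelow : 0 < b → hs.getD (b - 1) 0 ≤ hs.getD (hs.length - 1) 0) :
    stairPositions hs = insert (hs.length - 1) (stairPositions (hs.take b)) := by
  have getD_take : ∀ {m}, m < b → (hs.take b).getD m 0 = hs.getD m 0 := fun hm => by
    simp only [List.getD_eq_getElem?_getD, List.getElem?_take, hm, if_true]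
  ext m
  simp only [Finset.mem_insert, mem_stairPositions_s8, List.length_take, lt_min_iff]
  constructor
  · rintro ⟨hm, hstair⟩
    by_cases hmb : m < b
    · refine Or.inr ⟨⟨hmb, hm⟩, fun m' hm' hmm' => ?_⟩
      rw [getD_take hmb, getD_take hm'.1]
      exact hstair m' hm'.2 hmm'
    · by_contra hlast
      have := habove m (by omega) (by omega)
      have := hstair (hs.length - 1) (by omega) (by omega)
      omega
  · rintro (rfl | ⟨⟨hmb, hm⟩, hstair⟩)
    · exact ⟨by omega, fun m' hm' hmm' => by rw [show m' = hs.length - 1 by omega]⟩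
    have hstair' : ∀ m' < b, m ≤ m' → hs.getD m 0 ≤ hs.getD m' 0 := fun m' hm' hmm' => by
      simpa only [getD_take hmb, getD_take hm'] using hstair m' ⟨hm', by omega⟩ hmm'
    have hle_last : hs.getD m 0 ≤ hs.getD (hs.length - 1) 0 :=
      (hstair' (b - 1) (by omega) (by omega)).trans (hbelow (by omega))
    refine ⟨hm, fun m' hm' hmm' => ?_⟩
    rcases lt_or_ge m' b with hm'b | hm'b
    · exact hstair' m' hm'b hmm'
    rcases lt_or_ge m' (hs.length - 1) with hm'l | hm'l
    · exact hle_last.trans (habove m' hm'b hm'l).le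
    · rwa [show m' = hs.length - 1 by omega]

theorem getD_snd_eq_getD_map_snd (W : List (ℕ × ℕ)) (l : ℕ) :
    (W.getD l (0, 0)).2 = (W.map Prod.snd).getD l 0 := by
  simp only [List.getD_eq_getElem?_getD, List.getElem?_map]
  cases W[l]? <;> rfl

theorem getLast?_getD_snd_eq (W : List (ℕ × ℕ)) :
    ((W.getLast?).getD (0, 0)).2 = (W.map Prod.snd).getD (W.length - 1) 0 := by
  rw [List.getLast?_eq_getElem?, ← List.getD_eq_getElem?_getD, getD_snd_eq_getD_map_snd]

section bumpStart

variable {W : List (ℕ × ℕ)}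

theorem succ_le_bumpStart {l : ℕ} (hl : l < W.length - 1)
    (hle : (W.map Prod.snd).getD l 0 ≤ (W.map Prod.snd).getD (W.length - 1) 0) :
    l + 1 ≤ bumpStart W :=
  Finset.le_sup (f := (· + 1)) <| Finset.mem_filter.mpr
    ⟨Finset.mem_range.mpr hl, by rwa [getD_snd_eq_getD_map_snd, getLast?_getD_snd_eq]⟩

theorem getD_last_lt_of_bumpStart_le {m : ℕ} (hbm : bumpStart W ≤ m) (hm : m < W.length - 1) :
    (W.map Prod.snd).getD (W.length - 1) 0 < (W.map Prod.snd).getD m 0 := by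
  by_contra! hle
  have := succ_le_bumpStart hm hle
  omega

theorem getD_pred_bumpStart_le (hb : 0 < bumpStart W) :
    (W.map Prod.snd).getD (bumpStart W - 1) 0 ≤ (W.map Prod.snd).getD (W.length - 1) 0 := by
  set S := (Finset.range (W.length - 1)).filter
    fun l => (W.getD l (0, 0)).2 ≤ ((W.getLast?).getD (0, 0)).2 with hS
  have hSne : S.Nonempty := Finset.nonempty_iff_ne_empty.mpr fun h => by
    rw [bumpStart, ← hS, h, Finset.sup_empty] at hb
    exact hb.false
  obtain ⟨l, hl, hbl⟩ := Finset.exists_mem_eq_sup S hSne (· + 1)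
  obtain ⟨-, hle⟩ := Finset.mem_filter.mp hl
  rw [getD_snd_eq_getD_map_snd, getLast?_getD_snd_eq] at hle
  rwa [show bumpStart W - 1 = l by rw [bumpStart, ← hS, hbl]; rfl]

theorem stairPositions_eq_insert_bumpStart (hW : W ≠ []) :
    stairPositions (W.map Prod.snd) =
      insert (W.length - 1) (stairPositions ((W.take (bumpStart W)).map Prod.snd)) := by
  have h := stairPositions_eq_insert_take (hs := W.map Prod.snd) (b := bumpStart W)
    (by simpa only [List.length_map] using bumpStart_lt hW)
    (by simpa only [List.length_map] using fun m => getD_last_lt_of_bumpStart_le (W := W) (m := m))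
    (by simpa only [List.length_map] using getD_pred_bumpStart_le (W := W))
  rwa [List.length_map, ← List.map_take] at h

theorem length_take_bumpStart_lt (hW : W ≠ []) : (W.take (bumpStart W)).length < W.length := by
  rw [List.length_take]
  exact min_lt_of_left_lt (bumpStart_lt hW)

end bumpStart

theorem minColList_mem {L : List (ℕ × ℕ)} (h : L ≠ []) : minColList L ∈ L.map Prod.fst := by
  obtain ⟨a, ha⟩ := WithTop.ne_top_iff_exists.mp
    (mt List.minimum_eq_top.mp (by simpa using h) : (L.map Prod.fst).minimum ≠ ⊤)
  rw [minColList, ← ha, WithTop.untopD_coe]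
  exact List.minimum_mem ha.symm

/-- The minimal colours of the successive `lastBump`s of `W`, peeled off from the end. -/
def stairWord (W : List (ℕ × ℕ)) : List ℕ :=
  if h : W = [] then []
  else stairWord (W.take (bumpStart W)) ++ [minColList (W.drop (bumpStart W))]
termination_by W.length
decreasing_by exact length_take_bumpStart_lt h

theorem Sc_append_singleton {V : Type*} (col : V → ℕ) (c : ℕ) (u : List V) (v : V) :
    Sc col c (u ++ [v]) =
      if c < col v then Sc col c u else if col v = c then Sc col c u + 1 else 0 := by
  simp [Sc, scAux]

theorem StairSc_eq_Sc_stairWord (c : ℕ) (W : List (ℕ × ℕ)) :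
    StairSc c W = Sc id c (stairWord W) := by
  by_cases hW : W = []
  · rw [StairSc, stairWord, dif_pos hW, dif_pos hW]
    rfl
  · rw [StairSc, stairWord, dif_neg hW, dif_neg hW, Sc_append_singleton,
      ← StairSc_eq_Sc_stairWord c (W.take (bumpStart W))]
    rfl
termination_by W.length
decreasing_by exact length_take_bumpStart_lt hW

theorem length_stairWord (W : List (ℕ × ℕ)) :
    (stairWord W).length = (stairPositions (W.map Prod.snd)).card := by
  rw [stairWord]
  split_ifs with hW
  · simp [hW, stairPositions]
  · have hnotMem : W.length - 1 ∉ stairPositions ((W.take (bumpStart W)).map Prod.snd) :=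
      fun h => by
        have hlt := lt_length_of_mem_stairPositions h
        rw [List.length_map] at hlt
        have := length_take_bumpStart_lt hW
        omega
    rw [stairPositions_eq_insert_bumpStart hW, Finset.card_insert_of_notMem hnotMem,
      List.length_append, length_stairWord (W.take (bumpStart W)), List.length_singleton]
termination_by W.length
decreasing_by exact length_take_bumpStart_lt hW

theorem exists_mem_fst_eq_of_mem_stairWord {W : List (ℕ × ℕ)} {x : ℕ} (hx : x ∈ stairWord W) :
    ∃ p ∈ W, p.1 = x := by
  rw [stairWord] at hx
  split_ifs at hx with hW
  · simp at hx
  rcases List.mem_append.mp hx with hx | hx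
  · obtain ⟨p, hp, rfl⟩ := exists_mem_fst_eq_of_mem_stairWord hx
    exact ⟨p, List.mem_of_mem_take hp, rfl⟩
  · have hdrop : W.drop (bumpStart W) ≠ [] := by
      simpa [List.drop_eq_nil_iff] using bumpStart_lt hW
    obtain ⟨p, hp, hpx⟩ := List.mem_map.mp (minColList_mem hdrop)
    exact ⟨p, List.mem_of_mem_drop hp, hpx.trans (List.mem_singleton.mp hx).symm⟩
termination_by W.length
decreasing_by exact length_take_bumpStart_lt hW

theorem stmt8_general {Q Γ : Type*} (n : ℕ)
    (col : Q → ℕ) (hcol : ∀ q, col q < n)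
    (w : List (Config Q Γ)) :
    ∃ u : List ℕ, (∀ x ∈ u, x < n) ∧
      u.length = (stairPositions (w.map confSh)).card ∧
      ∀ c < n, StairSc c (toCH col w) = Sc id c u := by
  have hheights : (toCH col w).map Prod.snd = w.map confSh := by
    simp [toCH, confSh]
  refine ⟨stairWord (toCH col w), fun x hx => ?_, by rw [length_stairWord, hheights],
    fun c _ => StairSc_eq_Sc_stairWord c _⟩
  obtain ⟨p, hp, rfl⟩ := exists_mem_fst_eq_of_mem_stairWord hx
  obtain ⟨v, -, rfl⟩ := List.mem_map.mp hp
  exact hcol v.1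

/-- For every finite path `w` in a pushdown parity game with
`0 ∈ StairPositions(w)` there is a word `u` over `[n]` of length
`|Stairs(w)|` such that `StairSc_c(w) = Sc_c(u)` for every `c ∈ [n]`
(scores of `u` computed with the identity coloring). -/
theorem stmt8 {Q Γ : Type*} [Finite Q] [Finite Γ] (P : PDS Q Γ) (n : ℕ)
    (col : Q → ℕ) (hcol : ∀ q, col q < n)
    (w : List (Config Q Γ)) (hchain : w.Chain' P.step)
    (h0 : 0 ∈ stairPositions (w.map confSh)) :
    ∃ u : List ℕ, (∀ x ∈ u, x < n) ∧
      u.length = (stairPositions (w.map confSh)).card ∧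
      ∀ c < n, StairSc c (toCH col w) = Sc id c u :=
  stmt8_general n col hcol w

end FDGames
end

section
/- Let (G, col) be a pushdown parity game with coloring col : Q → [n] and let k ≥ 1. Every finite path w in G starting at a configuration of stack height 0 with |w| ≥ 2^(k^n) satisfies MaxStairSc_c(w) ≥ k for some c ∈ [n]. -/
namespace FDGames


/-!
Along a path, `Reset w` ends at the previous stair of `w`, so the score vector
`c ↦ StairSc_c w` arises from that of `Reset w` by the update "keep the colors below `d`,
increment `d`, reset the colors above `d`", where `d = MinCol (lastBump w)`. Read as a
base-`k` number with color `0` most significant, this update strictly increases the vector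
as long as all scores stay below `k`, so the gap `g` to `k ^ n - 1` strictly drops.
The part of `lastBump w` strictly between the two stairs is again a path from its lowest
height, scored from the vector of `Reset w`; by induction it is shorter than
`2 ^ g (Reset w)`. Summing up, `|w| + 2 ^ (g w + 1) ≤ 2 ^ g 0 + 1 = 2 ^ (k ^ n - 1) + 1`.
-/

def updateScores (v : ℕ → ℕ) (d : ℕ) : ℕ → ℕ := fun c =>
  if c < d then v c else if d = c then v c + 1 else 0

def stairScores (b : ℕ → ℕ) (w : List (ℕ × ℕ)) : ℕ → ℕ :=
  if h : w = [] then b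
  else updateScores (stairScores b (w.take (bumpStart w))) (minColList (w.drop (bumpStart w)))
termination_by w.length
decreasing_by
  have := bumpStart_lt h
  simp only [List.length_take]
  omega

@[simp] theorem stairScores_nil (b : ℕ → ℕ) : stairScores b [] = b := by
  rw [stairScores, dif_pos rfl]

theorem stairSc_eq_stairScores (c : ℕ) (w : List (ℕ × ℕ)) :
    StairSc c w = stairScores 0 w c := by
  by_cases hw : w = []
  · subst hw
    rw [StairSc, stairScores_nil, dif_pos rfl]; rfl
  rw [StairSc, stairScores, dif_neg hw, dif_neg hw,
    stairSc_eq_stairScores c (w.take (bumpStart w)), updateScores]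
termination_by w.length
decreasing_by
  have := bumpStart_lt hw
  simp only [List.length_take]
  omega

def lexValue (k : ℕ) : ℕ → (ℕ → ℕ) → ℕ
  | 0, _ => 0
  | n + 1, v => v 0 * k ^ n + lexValue k n (fun c => v (c + 1))

theorem lexValue_lt {k n : ℕ} {v : ℕ → ℕ} (hv : ∀ c < n, v c < k) :
    lexValue k n v < k ^ n := by
  induction n generalizing v with
  | zero => simp [lexValue]
  | succ n ih =>
    have hrest := ih (v := fun c => v (c + 1)) fun c hc => hv (c + 1) (by omega)
    have hhead : v 0 + 1 ≤ k := hv 0 (by omega)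
    calc lexValue k (n + 1) v < (v 0 + 1) * k ^ n := by rw [lexValue]; linarith
      _ ≤ k * k ^ n := Nat.mul_le_mul_right _ hhead
      _ = k ^ (n + 1) := by ring

@[simp] theorem lexValue_zero (k n : ℕ) : lexValue k n 0 = 0 := by
  induction n with
  | zero => rfl
  | succ n ih =>
    rw [lexValue, Pi.zero_apply, zero_mul, zero_add]
    exact ih

theorem lexValue_lt_updateScores {k n d : ℕ} {v : ℕ → ℕ} (hv : ∀ c < n, v c < k)
    (hd : d < n) :
    lexValue k n v < lexValue k n (updateScores v d) := by
  induction n generalizing v d with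
  | zero => omega
  | succ n ih =>
    have hrest := lexValue_lt (n := n) (v := fun c => v (c + 1)) fun c hc => hv (c + 1) (by omega)
    rcases d with _ | d
    · have htail : (fun c => updateScores v 0 (c + 1)) = 0 := by
        funext c; simp [updateScores]
      rw [lexValue, lexValue, htail, lexValue_zero]
      simp only [updateScores, lt_irrefl, if_false, if_true]
      nlinarith
    · have htail : (fun c => updateScores v (d + 1) (c + 1)) =
          updateScores (fun c => v (c + 1)) d := by
        funext c; simp [updateScores]
      rw [lexValue, lexValue, htail]
      simp only [updateScores, Nat.zero_lt_succ, if_true]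
      have := ih (v := fun c => v (c + 1)) (d := d) (fun c hc => hv (c + 1) (by omega)) (by omega)
      omega

theorem exists_minColList_eq {w : List (ℕ × ℕ)} (hw : w ≠ []) :
    ∃ p ∈ w, minColList w = p.1 := by
  obtain ⟨m, hm⟩ := WithTop.ne_top_iff_exists.mp
    (List.minimum_ne_top_of_ne_nil (l := w.map Prod.fst) (by simpa using hw))
  obtain ⟨p, hp, rfl⟩ := List.exists_of_mem_map (List.minimum_mem hm.symm)
  exact ⟨p, hp, by rw [minColList, ← hm]; rfl⟩

theorem minColList_lt {w : List (ℕ × ℕ)} {n : ℕ} (hw : w ≠ [])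
    (hcol : ∀ p ∈ w, p.1 < n) :
    minColList w < n := by
  obtain ⟨p, hp, hmin⟩ := exists_minColList_eq hw
  exact hmin ▸ hcol p hp

theorem bumpStart_eq_length {x v : List (ℕ × ℕ)} {z : ℕ × ℕ}
    (hx : ∀ a ∈ x.getLast?, a.2 ≤ z.2) (hv : ∀ p ∈ v, z.2 < p.2) :
    bumpStart (x ++ v ++ [z]) = x.length := by
  have hlast : ((x ++ v ++ [z]).getLast?).getD (0, 0) = z := by simp
  have hlen : (x ++ v ++ [z]).length - 1 = x.length + v.length := by simp
  unfold bumpStart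
  rw [hlast, hlen]
  apply le_antisymm
  · refine Finset.sup_le fun l hl => ?_
    rw [Finset.mem_filter, Finset.mem_range] at hl
    by_contra! hxl
    have hmem : v.getD (l - x.length) (0, 0) ∈ v := by
      rw [List.getD_eq_getElem _ _ (by omega)]
      exact List.getElem_mem _
    rw [List.append_assoc, List.getD_append_right _ _ _ _ (by omega),
      List.getD_append _ _ _ _ (by omega)] at hl
    exact absurd hl.2 (not_le.mpr (hv _ hmem))
  · rcases List.eq_nil_or_concat x with rfl | ⟨x', a, rfl⟩
    · exact Nat.zero_le _
    · have hmem : x'.length ∈ (Finset.range ((x'.concat a).length + v.length)).filter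
          fun l => ((x'.concat a ++ v ++ [z]).getD l (0, 0)).2 ≤ z.2 := by
        refine Finset.mem_filter.mpr ⟨Finset.mem_range.mpr ?_, ?_⟩
        · simp only [List.concat_eq_append, List.length_append, List.length_singleton]
          omega
        simpa [List.getD_append] using hx a (by simp)
      calc (x'.concat a).length = x'.length + 1 := by simp
        _ ≤ _ := Finset.le_sup (f := (· + 1)) hmem

theorem exists_split_lastBump (y : List (ℕ × ℕ)) (z : ℕ × ℕ) :
    ∃ x v, y = x ++ v ∧ (∀ a ∈ x.getLast?, a.2 ≤ z.2) ∧ ∀ p ∈ v, z.2 < p.2 := by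
  induction y using List.reverseRecOn with
  | nil => exact ⟨[], [], rfl, by simp, by simp⟩
  | append_singleton y a ih =>
    by_cases ha : a.2 ≤ z.2
    · exact ⟨y ++ [a], [], by simp, by simpa using ha, by simp⟩
    · obtain ⟨x, v, rfl, hx, hv⟩ := ih
      refine ⟨x, v ++ [a], by simp, hx, ?_⟩
      simp only [List.mem_append, List.mem_singleton]
      rintro p (hp | rfl)
      exacts [hv p hp, not_le.mp ha]

theorem stairScores_split_lastBump (b : ℕ → ℕ) {x v : List (ℕ × ℕ)} {z : ℕ × ℕ}
    (hx : ∀ a ∈ x.getLast?, a.2 ≤ z.2) (hv : ∀ p ∈ v, z.2 < p.2) :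
    stairScores b (x ++ v ++ [z]) = updateScores (stairScores b x) (minColList (v ++ [z])) := by
  rw [stairScores, dif_neg (by simp), bumpStart_eq_length hx hv, List.append_assoc,
    List.take_left, List.drop_left]

theorem stairScores_append (b : ℕ → ℕ) {x u : List (ℕ × ℕ)}
    (h : ∀ a ∈ x.getLast?, ∀ p ∈ u, a.2 ≤ p.2) :
    stairScores b (x ++ u) = stairScores (stairScores b x) u := by
  induction hlen : u.length using Nat.strong_induction_on generalizing u with
  | _ N ih =>
  rcases List.eq_nil_or_concat u with rfl | ⟨u', z, rfl⟩
  · simp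
  obtain ⟨x', v, rfl, hx', hv⟩ := exists_split_lastBump u' z
  have hxx' : ∀ a ∈ (x ++ x').getLast?, a.2 ≤ z.2 := by
    rw [List.getLast?_append]
    cases hlast : x'.getLast? with
    | some a => simpa [hlast] using hx'
    | none => simpa using fun a ha => h a ha z (by simp)
  have hrec : stairScores b (x ++ x') = stairScores (stairScores b x) x' :=
    ih x'.length (by simp [← hlen]) (fun a ha p hp => h a ha p (by simp [hp])) rfl
  simp only [List.concat_eq_append, ← List.append_assoc] at *
  rw [stairScores_split_lastBump b hxx' hv, hrec, stairScores_split_lastBump _ hx' hv]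

def lexGap (k n : ℕ) (v : ℕ → ℕ) : ℕ := k ^ n - 1 - lexValue k n v

theorem lexGap_updateScores_lt {k n d : ℕ} {v : ℕ → ℕ} (hv : ∀ c < n, v c < k)
    (hu : ∀ c < n, updateScores v d c < k) (hd : d < n) :
    lexGap k n (updateScores v d) < lexGap k n v := by
  have := lexValue_lt_updateScores hv hd
  have := lexValue_lt hu
  unfold lexGap
  omega

/-- The words of (color, stack height) pairs read off a path of a pushdown system that
starts at its lowest stack height. -/
structure IsPathWord (n : ℕ) (w : List (ℕ × ℕ)) : Prop where
  chain : w.IsChain fun p q => q.2 ≤ p.2 + 1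
  head_le : ∀ a ∈ w.head?, ∀ p ∈ w, a.2 ≤ p.2
  col_lt : ∀ p ∈ w, p.1 < n

section

variable {n : ℕ} {w x v : List (ℕ × ℕ)} {z : ℕ × ℕ}

theorem IsPathWord.prefix (hw : IsPathWord n w) (hx : x <+: w) : IsPathWord n x where
  chain := hw.chain.prefix hx
  head_le a ha p hp := by
    obtain ⟨t, rfl⟩ := hx
    exact hw.head_le a (by simp [List.head?_append, Option.mem_def.mp ha]) p
      (List.mem_append_left t hp)
  col_lt p hp := hw.col_lt p (hx.subset hp)

/-- A word strictly between two consecutive stair positions is again a path word, since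
its first letter is at most one step above the lower stair. -/
theorem IsPathWord.of_lastBump (hw : IsPathWord n (x ++ v ++ [z])) (hx : x ≠ [])
    (hxz : ∀ a ∈ x.getLast?, a.2 ≤ z.2) (hv : ∀ p ∈ v, z.2 < p.2) : IsPathWord n v where
  chain := hw.chain.infix (List.infix_append x v [z])
  head_le a ha p hp := by
    obtain ⟨l, hl⟩ := Option.ne_none_iff_exists'.mp (List.getLast?_eq_none_iff.not.mpr hx)
    have hstep := (List.isChain_append.mp (List.append_assoc x v [z] ▸ hw.chain)).2.2 l hl a
      (by simp [List.head?_append, Option.mem_def.mp ha])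
    have := hxz l hl
    have := hv p hp
    omega
  col_lt p hp := hw.col_lt p (by simp [hp])

theorem IsPathWord.eq_nil_of_lt (hw : IsPathWord n (v ++ [z])) (hv : ∀ p ∈ v, z.2 < p.2) :
    v = [] := by
  by_contra hne
  obtain ⟨a, ha⟩ := Option.ne_none_iff_exists'.mp (List.head?_eq_none_iff.not.mpr hne)
  have := hw.head_le a (by simp [ha]) z (by simp)
  have := hv a (List.mem_of_head? ha)
  omega

end

theorem length_add_two_pow_le {n k : ℕ} {b : ℕ → ℕ} {w : List (ℕ × ℕ)} (hne : w ≠ [])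
    (hw : IsPathWord n w) (hsc : ∀ y, y <+: w → ∀ c < n, stairScores b y c < k) :
    w.length + 2 ^ (lexGap k n (stairScores b w) + 1) ≤ 2 ^ lexGap k n b + 1 := by
  induction hN : w.length using Nat.strong_induction_on generalizing b w with
  | _ N ih =>
  subst hN
  obtain ⟨y, z, rfl⟩ : ∃ y z, w = y ++ [z] := by
    simpa using (List.eq_nil_or_concat w).resolve_left hne
  obtain ⟨x, v, rfl, hxz, hv⟩ := exists_split_lastBump y z
  have hx : x <+: x ++ v ++ [z] := by simp [List.append_assoc]
  have hgap : lexGap k n (stairScores b (x ++ v ++ [z])) + 1 ≤ lexGap k n (stairScores b x) := by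
    have hscores := stairScores_split_lastBump b hxz hv
    rw [hscores]
    refine lexGap_updateScores_lt (hsc x hx) (hscores ▸ hsc _ (List.prefix_refl _))
      (minColList_lt (by simp) fun p hp => hw.col_lt p (by simp_all))
  have hpow := Nat.pow_le_pow_right (show 0 < 2 by norm_num) hgap
  rw [pow_succ] at hpow ⊢
  rcases eq_or_ne x [] with rfl | hxne
  · obtain rfl : v = [] := hw.eq_nil_of_lt hv
    simp only [List.nil_append, stairScores_nil, List.length_singleton] at hpow ⊢
    omega
  · have hxbound := ih x.length (by simp) hxne (hw.prefix hx)
      (fun y hy => hsc y (hy.trans hx)) rfl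
    have hvbound : v.length < 2 ^ lexGap k n (stairScores b x) := by
      rcases eq_or_ne v [] with rfl | hvne
      · exact Nat.two_pow_pos _
      have hprefix : ∀ y, y <+: v → x ++ y <+: x ++ v ++ [z] := fun y hy => by
        simpa [List.append_assoc] using hy.trans (List.prefix_append v [z])
      have := ih v.length (by simp only [List.length_append, List.length_singleton]; omega) hvne
        (hw.of_lastBump hxne hxz hv)
        (fun y hy c hc => by
          rw [← stairScores_append b fun a ha p hp => (hxz a ha).trans (hv p (hy.subset hp)).le]
          exact hsc (x ++ y) (hprefix y hy) c hc)
        rfl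
      rw [pow_succ] at this
      have := Nat.one_le_two_pow (n := lexGap k n (stairScores (stairScores b x) v))
      omega
    rw [pow_succ] at hxbound
    simp only [List.length_append, List.length_singleton]
    omega

theorem PDS.step_length_le {Q Γ : Type*} {P : PDS Q Γ} {u v : Config Q Γ} (h : P.step u v) :
    v.2.length ≤ u.2.length + 1 := by
  rcases h with ⟨hu, hΔ⟩ | ⟨a, rest, α, hu, hΔ, hv⟩
  · simpa [hu] using P.bound1 _ _ _ hΔ
  · have := P.bound2 _ _ _ _ hΔ
    simp only [hu, hv, List.length_append, List.length_cons]
    omega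

theorem isPathWord_toCH {Q Γ : Type*} {P : PDS Q Γ} {n : ℕ} {col : Q → ℕ}
    (hcol : ∀ q, col q < n) {w : List (Config Q Γ)} (hchain : w.IsChain P.step)
    (hhead : ∃ q, w.head? = some (q, [])) : IsPathWord n (toCH col w) where
  chain := (List.isChain_map _).mpr (hchain.imp fun _ _ => PDS.step_length_le)
  head_le a ha p _ := by
    obtain ⟨q, hq⟩ := hhead
    obtain rfl : a = (col q, 0) := by simpa [toCH, hq, eq_comm] using ha
    exact Nat.zero_le _
  col_lt p hp := by
    obtain ⟨v, -, rfl⟩ := List.mem_map.mp hp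
    exact hcol v.1

theorem stmt9_general {Q Γ : Type*} (P : PDS Q Γ) (n : ℕ)
    (col : Q → ℕ) (hcol : ∀ q, col q < n) (k : ℕ)
    (w : List (Config Q Γ)) (hchain : w.Chain' P.step)
    (hhead : ∃ q, w.head? = some (q, []))
    (hlen : 2 ^ k ^ n ≤ w.length) :
    ∃ c < n, k ≤ MaxStairSc c (toCH col w) := by
  by_contra! hsmall
  have hne : toCH col w ≠ [] := by
    obtain ⟨q, hq⟩ := hhead
    simp [toCH, ← List.head?_eq_none_iff, hq]
  have hsc : ∀ y, y <+: toCH col w → ∀ c < n, stairScores 0 y c < k := by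
    intro y hy c hc
    rw [← stairSc_eq_stairScores, List.prefix_iff_eq_take.mp hy]
    exact (Finset.le_sup (f := fun m => StairSc c ((toCH col w).take m))
      (Finset.mem_range.mpr (Nat.lt_succ_of_le hy.length_le))).trans_lt (hsmall c hc)
  have hbound := length_add_two_pow_le hne (isPathWord_toCH hcol hchain hhead) hsc
  have hpow : 2 ^ lexGap k n 0 ≤ 2 ^ k ^ n :=
    Nat.pow_le_pow_right (by norm_num) (by simp [lexGap])
  have := Nat.one_le_two_pow (n := lexGap k n (stairScores 0 (toCH col w)) + 1)
  rw [show (toCH col w).length = w.length from List.length_map _] at hbound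
  omega

/-- Lemma 3: every finite path of length at least `2 ^ (k ^ n)` starting at a
configuration of stack height 0 reaches stair-score `k` for some color
`c ∈ [n]`. -/
theorem stmt9 {Q Γ : Type*} [Finite Q] [Finite Γ] (P : PDS Q Γ) (n : ℕ)
    (col : Q → ℕ) (hcol : ∀ q, col q < n) (k : ℕ) (hk : 1 ≤ k)
    (w : List (Config Q Γ)) (hchain : w.Chain' P.step)
    (hhead : ∃ q, w.head? = some (q, []))
    (hlen : 2 ^ k ^ n ≤ w.length) :
    ∃ c < n, k ≤ MaxStairSc c (toCH col w) :=
  stmt9_general P n col hcol k w hchain hhead hlen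

end FDGames
end

section
/- For every n ≥ 1, Player 0 wins the pushdown parity game (G_n, col_n) of the lower-bound family defined in the context. -/
namespace FDGames


/-- The `i`-th prime number (`nthPrime 0 = 2`). -/
noncomputable def nthPrime (i : ℕ) : ℕ := Nat.nth Nat.Prime i

theorem nthPrime_pos (i : ℕ) : 0 < nthPrime i := (Nat.prime_nth_prime i).pos

/-- The states of the lower-bound pushdown system `P_n`:
`qin`, `qbox = q_□` and the counting states `cnt i j = q_{i+1}^j` with
`j < p_{i+1}`. -/
inductive QLB (n : ℕ) where
  | qin : QLB n
  | qbox : QLB n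
  | cnt : (i : Fin n) → (j : Fin (nthPrime i)) → QLB n

/-- The transition relation `Δ_n` of the lower-bound pushdown system. -/
def lbDelta (n : ℕ) : Set (QLB n × Option Unit × QLB n × List Unit) :=
  { t |
    t = (QLB.qin, some (), QLB.qin, [(), ()]) ∨
    t = (QLB.qin, none, QLB.qin, [()]) ∨
    t = (QLB.qin, some (), QLB.qbox, [(), ()]) ∨
    t = (QLB.qin, none, QLB.qbox, [()]) ∨
    (∃ i : Fin n, t = (QLB.qbox, some (), QLB.cnt i ⟨0, nthPrime_pos i⟩, [()])) ∨
    (∃ (i : Fin n) (j : Fin (nthPrime i)),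
      t = (QLB.cnt i j, some (),
           QLB.cnt i ⟨((j : ℕ) + 1) % nthPrime i, Nat.mod_lt _ (nthPrime_pos i)⟩, [])) ∨
    (∃ q : QLB n, q ≠ QLB.qin ∧ t = (q, none, q, [])) }

/-- The lower-bound pushdown system `P_n` (for `n ≥ 1`). -/
def lbPDS (n : ℕ) (hn : 1 ≤ n) : PDS (QLB n) Unit where
  qin := QLB.qin
  Δ := lbDelta n
  bound2 := by
    intro q A p α h
    simp only [lbDelta, Set.mem_setOf_eq, Prod.mk.injEq] at h
    rcases h with ⟨-,-,-,rfl⟩|⟨-,-,-,rfl⟩|⟨-,-,-,rfl⟩|⟨-,-,-,rfl⟩|⟨i,-,-,-,rfl⟩|⟨i,j,-,-,-,rfl⟩|⟨q',hq,-,-,-,rfl⟩ <;> simp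
  bound1 := by
    intro q p α h
    simp only [lbDelta, Set.mem_setOf_eq, Prod.mk.injEq, reduceCtorEq,
      false_and, and_false, false_or, exists_false, or_false] at h
    rcases h with ⟨-,-,-,rfl⟩|⟨-,-,-,rfl⟩|⟨q',hq,-,-,-,rfl⟩ <;> simp
  df := by
    intro q A
    rcases A with _ | u
    · rcases q with _ | _ | ⟨i, j⟩
      · exact ⟨QLB.qin, [()], Or.inr (Or.inl rfl)⟩
      · refine ⟨QLB.qbox, [], ?_⟩
        refine Or.inr (Or.inr (Or.inr (Or.inr (Or.inr (Or.inr ⟨QLB.qbox, ?_, rfl⟩)))))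
        exact by intro h; cases h
      · refine ⟨QLB.cnt i j, [], ?_⟩
        refine Or.inr (Or.inr (Or.inr (Or.inr (Or.inr (Or.inr ⟨QLB.cnt i j, ?_, rfl⟩)))))
        exact by intro h; cases h
    · rcases q with _ | _ | ⟨i, j⟩
      · exact ⟨QLB.qin, [(), ()], Or.inl rfl⟩
      · exact ⟨QLB.cnt ⟨0, hn⟩ ⟨0, nthPrime_pos _⟩, [()],
          Or.inr (Or.inr (Or.inr (Or.inr (Or.inl ⟨⟨0, hn⟩, rfl⟩))))⟩
      · exact ⟨QLB.cnt i ⟨((j : ℕ) + 1) % nthPrime i, Nat.mod_lt _ (nthPrime_pos i)⟩, [],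
          Or.inr (Or.inr (Or.inr (Or.inr (Or.inr (Or.inl ⟨i, j, rfl⟩)))))⟩

/-- The partition of the lower-bound game: Player 1 owns exactly `q_□`. -/
def lbOwn {n : ℕ} : QLB n → Fin 2
  | QLB.qbox => 1
  | _ => 0

/-- The coloring of the lower-bound game: `col (q_i^0) = 0`, all other states
have color `1`. -/
def lbCol {n : ℕ} : QLB n → ℕ
  | QLB.cnt _ j => if (j : ℕ) = 0 then 0 else 1
  | _ => 1

/-!
Player 0 pushes `N = p_1 ⋯ p_n` symbols and then hands the play to Player 1 in `q_□`. Whichever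
`i` Player 1 picks, the play pops the whole stack counting modulo `p_i`; since `p_i ∣ N` it reaches
the bottom of the stack in `q_i^0`, where it loops forever on color `0`.
-/

theorem winningPlay_zero_of_frequently {V : Type*} {col : V → ℕ} {ρ : ℕ → V}
    (h : ∃ᶠ m in Filter.atTop, col (ρ m) = 0) : WinningPlay col 0 ρ := by
  have hmem : 0 ∈ {c | ∀ N, ∃ m, N ≤ m ∧ col (ρ m) = c} := fun N => by
    simpa [ge_iff_le] using Filter.frequently_atTop.mp h N
  simp [WinningPlay, minInfCol, Nat.sInf_eq_zero.mpr (Or.inl hmem)]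

section LowerBoundGame

variable {n : ℕ} {hn : 1 ≤ n}

theorem lbStep_cnt_cons {i : Fin n} {j : Fin (nthPrime i)} {rest : List Unit}
    {v : Config (QLB n) Unit} (h : (lbPDS n hn).step (QLB.cnt i j, () :: rest) v) :
    v = (QLB.cnt i ⟨((j : ℕ) + 1) % nthPrime i, Nat.mod_lt _ (nthPrime_pos _)⟩, rest) := by
  simp [PDS.step, lbPDS, lbDelta] at h
  obtain ⟨⟨_, _, ⟨rfl, hj⟩, hq⟩, hγ⟩ := h
  cases hj
  exact Prod.ext hq hγ

theorem lbStep_cnt_nil {i : Fin n} {j : Fin (nthPrime i)} {v : Config (QLB n) Unit}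
    (h : (lbPDS n hn).step (QLB.cnt i j, []) v) : v = (QLB.cnt i j, []) := by
  simpa [PDS.step, lbPDS, lbDelta] using h

theorem lbStep_qbox_cons {rest : List Unit} {v : Config (QLB n) Unit}
    (h : (lbPDS n hn).step (QLB.qbox, () :: rest) v) :
    ∃ i : Fin n, v = (QLB.cnt i ⟨0, nthPrime_pos i⟩, () :: rest) := by
  simpa [PDS.step, lbPDS, lbDelta, Prod.ext_iff] using h

theorem lbPath_countdown {ρ : ℕ → Config (QLB n) Unit}
    (hρ : ∀ m, (lbPDS n hn).step (ρ m) (ρ (m + 1))) {m₀ L : ℕ} {i : Fin n}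
    (h₀ : ρ m₀ = (QLB.cnt i ⟨0, nthPrime_pos i⟩, List.replicate L ())) (k : ℕ) :
    ρ (m₀ + k) = (QLB.cnt i ⟨min k L % nthPrime i, Nat.mod_lt _ (nthPrime_pos _)⟩,
      List.replicate (L - k) ()) := by
  induction k with
  | zero => simpa using h₀
  | succ k ih =>
    have hstep := hρ (m₀ + k)
    rw [ih] at hstep
    rcases lt_or_ge k L with hk | hk
    · obtain ⟨r, hr⟩ : ∃ r, L - k = r + 1 := ⟨L - k - 1, by omega⟩
      rw [hr, List.replicate_succ] at hstep
      rw [← add_assoc, lbStep_cnt_cons hstep, min_eq_left hk.le, min_eq_left (hk : k + 1 ≤ L),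
        show L - (k + 1) = r by omega]
      simp [Nat.mod_add_mod]
    · rw [Nat.sub_eq_zero_of_le hk, List.replicate_zero] at hstep
      rw [← add_assoc, lbStep_cnt_nil hstep]
      simp [min_eq_right hk, min_eq_right (Nat.le_succ_of_le hk),
        Nat.sub_eq_zero_of_le (Nat.le_succ_of_le hk)]

noncomputable def pushThenBox (n : ℕ) (hn : 1 ≤ n) (N : ℕ) :
    List (Config (QLB n) Unit) → Config (QLB n) Unit → Config (QLB n) Unit
  | _, (QLB.qin, γ) => (if γ.length + 1 = N then QLB.qbox else QLB.qin, () :: γ)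
  | _, v => Classical.choose (((lbPDS n hn).graph lbOwn).succ v)

theorem pushThenBox_isStrategy (N : ℕ) :
    IsStrategy ((lbPDS n hn).graph lbOwn) (pushThenBox n hn N) := by
  rintro h ⟨q, γ⟩
  rcases q with _ | _ | ⟨i, j⟩
  · show (lbPDS n hn).step _ _
    rcases γ with _ | ⟨⟨⟩, rest⟩ <;> simp only [pushThenBox] <;> split_ifs <;>
      simp [PDS.step, lbPDS, lbDelta]
  all_goals exact Classical.choose_spec (((lbPDS n hn).graph lbOwn).succ _)

variable {N : ℕ} {ρ : ℕ → Config (QLB n) Unit}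

theorem pushThenBox_step_qin
    (hρ : ConsistentPlay ((lbPDS n hn).graph lbOwn) 0 (pushThenBox n hn N) ρ) {m : ℕ}
    {γ : List Unit} (hm : ρ m = (QLB.qin, γ)) :
    ρ (m + 1) = (if γ.length + 1 = N then QLB.qbox else QLB.qin, () :: γ) := by
  rw [hρ.2 m (by rw [hm]; rfl), hm]
  rfl

theorem pushThenBox_eq_qin
    (hρ : ConsistentPlay ((lbPDS n hn).graph lbOwn) 0 (pushThenBox n hn N) ρ) {m : ℕ}
    (hm : m < N) : ρ m = (QLB.qin, List.replicate m ()) := by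
  induction m with
  | zero => exact hρ.1.1
  | succ m ih =>
    rw [pushThenBox_step_qin hρ (ih (by omega))]
    simp [show m + 1 ≠ N by omega, List.replicate_succ]

theorem pushThenBox_reaches_cnt
    (hρ : ConsistentPlay ((lbPDS n hn).graph lbOwn) 0 (pushThenBox n hn N) ρ) (hN : 0 < N) :
    ∃ i : Fin n, ρ (N + 1) = (QLB.cnt i ⟨0, nthPrime_pos i⟩, List.replicate N ()) := by
  obtain ⟨M, rfl⟩ : ∃ M, N = M + 1 := ⟨N - 1, by omega⟩
  have hbox := pushThenBox_step_qin hρ (pushThenBox_eq_qin hρ (Nat.lt_succ_self M))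
  have hstep := hρ.1.2 (M + 1)
  rw [hbox, List.length_replicate, if_pos rfl] at hstep
  simpa [List.replicate_succ] using lbStep_qbox_cons hstep

end LowerBoundGame

/-- Player 0 wins the pushdown parity game `(G_n, col_n)` of the lower-bound
family. -/
theorem stmt16 (n : ℕ) (hn : 1 ≤ n) :
    WinsGame ((lbPDS n hn).graph lbOwn) (fun v => lbCol v.1) 0 := by
  set N := ∏ i : Fin n, nthPrime i
  have hdvd (i : Fin n) : nthPrime i ∣ N := Finset.dvd_prod_of_mem _ (Finset.mem_univ i)
  have hN : 0 < N := Finset.prod_pos fun i _ => nthPrime_pos i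
  refine ⟨pushThenBox n hn N, pushThenBox_isStrategy N, fun ρ hρ => ?_⟩
  obtain ⟨i, hi⟩ := pushThenBox_reaches_cnt hρ hN
  refine winningPlay_zero_of_frequently (Filter.frequently_atTop.mpr fun K => ?_)
  refine ⟨N + 1 + (N + K), by omega, ?_⟩
  rw [lbPath_countdown hρ.1.2 hi]
  simp [lbCol, Nat.mod_eq_zero_of_dvd (hdvd i)]

end FDGames
end
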